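/- arXiv:math/9912247 — 8 statements merged into one kernel-verified Lean document; each statement's English description precedes it below -/
import Mathlib

section
/- Let L be a subgroup (lattice) of ℤ^n. Then the following two conditions are equivalent: (d) L is the image of an injective ℤ-linear map given by an integer n×m matrix B with linearly independent columns, all of whose maximal (m×m) minors lie in the set {0, 1, −1}; (e) L is the kernel of a ℤ-linear map given by an integer d×n matrix A with linearly independent rows, such that there exists an integer m with all maximal (d×d) minors of A lying in the set {0, m, −m}. -/
/-!
After permuting coordinates by some `ρ`, a lattice of the kind in (d) or (e) is presented in
normal form: it is the image of `[1; -D]` and the kernel of `[D | 1]` for one integer matrix `D`.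
The maximal minors of these two matrices agree up to sign on complementary index sets, so
one of them has all maximal minors in `{0, 1, -1}` exactly when the other does.

From (d): a nonzero maximal minor `det B₀` of `B` is `±1`, so `B * B₀⁻¹` has the same image and
the same maximal minors up to sign, and contains an identity block.
From (e): if `det A₀` is a nonzero maximal minor of `A`, Cramer's rule and the divisibility of all
maximal minors of `A` by `det A₀ = ±m` give `A = A₀ * E` with `E` integral with an identity
block; `E` has the kernel of `A` and maximal minors `det (A_c) / det A₀ ∈ {0, 1, -1}`.
-/

open Matrix Function

theorem Int.mem_zero_pm_iff {b m : ℤ} :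
    b ∈ ({0, m, -m} : Set ℤ) ↔ b = 0 ∨ b.natAbs = m.natAbs := by
  rw [Int.natAbs_eq_natAbs_iff]
  simp only [Set.mem_insert_iff, Set.mem_singleton_iff]

theorem Int.mem_zero_pm_of_associated {a b m : ℤ} (h : Associated a b)
    (ha : a ∈ ({0, m, -m} : Set ℤ)) : b ∈ ({0, m, -m} : Set ℤ) := by
  rw [Int.mem_zero_pm_iff, ← Int.natAbs_eq_zero] at ha ⊢
  rwa [← Int.associated_iff_natAbs.1 h]

theorem Int.dvd_of_mem_zero_pm {a b m : ℤ} (ha : a ∈ ({0, m, -m} : Set ℤ)) (ha₀ : a ≠ 0)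
    (hb : b ∈ ({0, m, -m} : Set ℤ)) : a ∣ b := by
  rw [Int.mem_zero_pm_iff] at ha hb
  rw [← Int.natAbs_dvd_natAbs, ha.resolve_left ha₀]
  rcases hb with rfl | hb
  · exact dvd_zero _
  · rw [hb]

theorem Int.mem_zero_one_neg_one_of_mul_mem {a b m : ℤ} (ha : a ∈ ({0, m, -m} : Set ℤ))
    (ha₀ : a ≠ 0) (hab : a * b ∈ ({0, m, -m} : Set ℤ)) : b ∈ ({0, 1, -1} : Set ℤ) := by
  rw [Int.mem_zero_pm_iff] at ha hab ⊢
  rw [Int.natAbs_mul, ← ha.resolve_left ha₀] at hab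
  rcases hab with hab | hab
  · exact Or.inl ((mul_eq_zero.1 hab).resolve_left ha₀)
  · exact Or.inr (by simpa [Int.natAbs_ne_zero.2 ha₀] using hab)

section Complement

variable {κ γ ι : Type*} [Fintype κ] [Fintype γ] [Fintype ι]

theorem Function.Embedding.exists_bijective_sumElim_left (c : γ ↪ ι)
    (h : Fintype.card κ + Fintype.card γ = Fintype.card ι) :
    ∃ r : κ ↪ ι, Bijective (Sum.elim r c) := by
  classical
  have hcard : Fintype.card κ = Fintype.card {i // i ∉ Set.range c} := by
    rw [Fintype.card_subtype_compl, Set.card_range_of_injective c.injective]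
    omega
  let e := Fintype.equivOfCardEq hcard
  refine ⟨e.toEmbedding.trans (Embedding.subtype _), ?_⟩
  refine (Fintype.bijective_iff_injective_and_card _).2 ⟨?_, by simp [h]⟩
  exact (Subtype.val_injective.comp e.injective).sumElim c.injective
    fun k j hkj => (e k).2 ⟨j, hkj.symm⟩

theorem Function.Embedding.exists_bijective_sumElim_right (r : κ ↪ ι)
    (h : Fintype.card κ + Fintype.card γ = Fintype.card ι) :
    ∃ c : γ ↪ ι, Bijective (Sum.elim r c) := by
  obtain ⟨c, hc⟩ := r.exists_bijective_sumElim_left (κ := γ) (by omega)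
  refine ⟨c, ?_⟩
  simpa [Sum.elim_swap] using hc.comp (Equiv.sumComm κ γ).bijective

end Complement

section Minors

variable {R κ γ ι : Type*} [CommRing R]

theorem LinearIndependent.exists_det_submatrix_ne_zero_of_field {K : Type*} [Field K]
    [Fintype γ] [DecidableEq γ] [Fintype ι] {M : Matrix γ ι K} (hM : LinearIndependent K M) :
    ∃ c : γ ↪ ι, (M.submatrix id c).det ≠ 0 := by
  obtain ⟨κ, a, ha, hspan, hli⟩ := exists_linearIndependent' K M.col
  have : Finite κ := Finite.of_injective a ha
  have : Fintype κ := Fintype.ofFinite κ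
  have hcard : Fintype.card γ = Fintype.card κ := by
    rw [← hM.rank_matrix, rank_eq_finrank_span_cols, ← hspan, ← Set.finrank,
      ← linearIndependent_iff_card_eq_finrank_span.1 hli]
  let e := Fintype.equivOfCardEq hcard
  refine ⟨e.toEmbedding.trans ⟨a, ha⟩, fun h0 => ?_⟩
  have hcols : LinearIndependent K (M.submatrix id (a ∘ e)).col := hli.comp e e.injective
  exact ((isUnit_iff_isUnit_det _).1 (linearIndependent_cols_iff_isUnit.1 hcols)).ne_zero h0

theorem LinearIndependent.exists_det_submatrix_ne_zero [IsDomain R] [Fintype γ] [DecidableEq γ]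
    [Fintype ι] {M : Matrix γ ι R} (hM : LinearIndependent R M) :
    ∃ c : γ ↪ ι, (M.submatrix id c).det ≠ 0 := by
  let K := FractionRing R
  let φ := (Algebra.linearMap R K).compLeft ι
  have hφ : LinearMap.ker φ = ⊥ := LinearMap.ker_eq_bot.2 fun _ _ h =>
    funext fun i => IsFractionRing.injective R K (congrFun h i)
  have hMK : LinearIndependent K (M.map (algebraMap R K)) := by
    change LinearIndependent K (φ ∘ M)
    rw [← LinearIndependent.iff_fractionRing R K]
    exact hM.map' φ hφ
  obtain ⟨c, hc⟩ := hMK.exists_det_submatrix_ne_zero_of_field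
  refine ⟨c, fun h0 => hc ?_⟩
  rw [submatrix_map, ← RingHom.mapMatrix_apply, ← RingHom.map_det, h0, map_zero]

theorem Matrix.det_submatrix_eq_zero_of_not_injective [Fintype γ] [DecidableEq γ]
    (A : Matrix γ ι R) {c : γ → ι} (hc : ¬Injective c) : (A.submatrix id c).det = 0 := by
  obtain ⟨i, j, hij, hne⟩ := Function.not_injective_iff.1 hc
  exact det_zero_of_column_eq hne fun k => by simp [hij]

theorem Matrix.adjugate_mul_apply_eq_det_submatrix_update [Fintype γ] [DecidableEq γ]
    (A : Matrix γ ι R) (c : γ → ι) (i : γ) (j : ι) :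
    (adjugate (A.submatrix id c) * A) i j = (A.submatrix id (update c i j)).det := by
  have hcramer : (adjugate (A.submatrix id c) * A) i j = cramer (A.submatrix id c) (Aᵀ j) i := by
    rw [cramer_eq_adjugate_mulVec]
    rfl
  rw [hcramer, cramer_apply]
  congr 1
  ext k l
  by_cases hl : l = i
  · subst hl
    simp
  · simp [hl]

theorem Matrix.exists_eq_submatrix_mul_of_det_dvd [IsDomain R] [Fintype γ] [DecidableEq γ]
    (A : Matrix γ ι R) (c₀ : γ → ι) (h₀ : (A.submatrix id c₀).det ≠ 0)
    (hdvd : ∀ c : γ → ι, (A.submatrix id c₀).det ∣ (A.submatrix id c).det) :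
    ∃ E : Matrix γ ι R, E.submatrix id c₀ = 1 ∧ A = A.submatrix id c₀ * E := by
  set A₀ := A.submatrix id c₀
  have hdvd' : ∀ i j, A₀.det ∣ (adjugate A₀ * A) i j := fun i j => by
    rw [adjugate_mul_apply_eq_det_submatrix_update]
    exact hdvd _
  obtain ⟨E, hE⟩ : ∃ E : Matrix γ ι R, adjugate A₀ * A = A₀.det • E :=
    ⟨of fun i j => (hdvd' i j).choose, by ext i j; exact (hdvd' i j).choose_spec⟩
  have hcancel : ∀ {M N : Matrix γ ι R}, A₀.det • M = A₀.det • N → M = N := fun h => by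
    ext i j
    exact mul_left_cancel₀ h₀ (congrFun (congrFun h i) j)
  refine ⟨E, ?_, hcancel ?_⟩
  · ext i j
    refine mul_left_cancel₀ h₀ ?_
    change (A₀.det • E) i (c₀ j) = (A₀.det • (1 : Matrix γ γ R)) i j
    rw [← hE, ← adjugate_mul]
    rfl
  · rw [← Matrix.mul_smul, ← hE, ← Matrix.mul_assoc, mul_adjugate, Matrix.smul_mul,
      Matrix.one_mul]

theorem Matrix.ker_mulVecLin_mul_of_det_ne_zero [IsDomain R] [Fintype γ] [DecidableEq γ]
    [Fintype ι] {P : Matrix γ γ R} (hP : P.det ≠ 0) (E : Matrix γ ι R) :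
    LinearMap.ker (P * E).mulVecLin = LinearMap.ker E.mulVecLin := by
  ext x
  simp only [LinearMap.mem_ker, mulVecLin_apply, ← mulVec_mulVec]
  exact ⟨eq_zero_of_mulVec_eq_zero hP, fun h => by rw [h, mulVec_zero]⟩

theorem Matrix.range_mulVecLin_mul_of_isUnit_det [Fintype κ] [DecidableEq κ] (B : Matrix ι κ R)
    {U : Matrix κ κ R} (hU : IsUnit U.det) :
    LinearMap.range (B * U).mulVecLin = LinearMap.range B.mulVecLin := by
  rw [mulVecLin_mul]
  exact LinearMap.range_comp_of_range_eq_top _ (LinearMap.range_eq_top.2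
    (mulVec_surjective_iff_isUnit.2 ((isUnit_iff_isUnit_det U).2 hU)))

theorem Matrix.linearIndependent_of_submatrix_eq_one [Fintype γ] [DecidableEq γ]
    {M : Matrix γ ι R} {c : γ → ι} (h : M.submatrix id c = 1) : LinearIndependent R M := by
  refine LinearIndependent.of_comp (LinearMap.funLeft R R c) ?_
  have hbasis : LinearMap.funLeft R R c ∘ M = Pi.basisFun R γ := by
    ext i j
    rw [Pi.basisFun_apply, ← one_eq_pi_single, ← h]
    rfl
  rw [hbasis]
  exact (Pi.basisFun R γ).linearIndependent

/- Both determinants are, up to the sign of the permutation `Sum.elim r c`, the determinant of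
`N = [fromRows 1 (-D) | columns c of 1]`: the unimodular `fromBlocks 1 0 D 1` turns `N` into
a block triangular matrix with corner `(fromCols D 1).submatrix id c`, and permuting the rows of
`N` by `Sum.elim r c` gives one with corner `(fromRows 1 (-D)).submatrix r id`. -/
theorem Matrix.associated_det_submatrix_fromRows_fromCols [Fintype κ] [Fintype γ]
    [DecidableEq κ] [DecidableEq γ] (D : Matrix γ κ R) (r : κ → κ ⊕ γ) (c : γ → κ ⊕ γ)
    (h : Bijective (Sum.elim r c)) :
    Associated ((fromRows 1 (-D)).submatrix r id).det
      ((fromCols D 1).submatrix id c).det := by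
  obtain ⟨-, hc, hrc⟩ := Sum.elim_injective.1 h.1
  let σ := Equiv.ofBijective _ h
  let E : Matrix (κ ⊕ γ) γ R := (1 : Matrix (κ ⊕ γ) (κ ⊕ γ) R).submatrix id c
  let N := fromCols (fromRows 1 (-D)) E
  have hQN : (fromBlocks 1 0 D 1 * N).det = ((fromCols D 1).submatrix id c).det := by
    have hcorner : (fromCols D 1).submatrix id c =
        D * E.submatrix Sum.inl id + E.submatrix Sum.inr id := by
      ext i j
      rcases hcj : c j with k | k <;> simp [E, mul_apply, one_apply, hcj]
    have hN : N = fromBlocks 1 (E.submatrix Sum.inl id) (-D) (E.submatrix Sum.inr id) := by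
      rw [← fromCols_fromRows_eq_fromBlocks]
      ext (i | i) j <;> rfl
    rw [hN, fromBlocks_multiply, hcorner]
    simp [det_fromBlocks_zero₂₁]
  have hσN : N.submatrix σ id =
      fromBlocks ((fromRows 1 (-D)).submatrix r id) 0 ((fromRows 1 (-D)).submatrix c id) 1 := by
    ext (i | i) (j | j) <;> simp [N, E, σ, one_apply, hrc, hc.eq_iff]
  rw [det_mul, det_fromBlocks_zero₁₂, det_one, det_one, one_mul, one_mul] at hQN
  have hperm := det_permute σ N
  rw [hσN, det_fromBlocks_zero₁₂, det_one, mul_one] at hperm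
  rw [hperm, ← hQN]
  exact associated_unit_mul_left _ _ ((Equiv.Perm.sign σ).isUnit.map (Int.castRingHom R))

end Minors

section NormalForm

variable {R κ γ ι : Type*} [CommRing R] (ρ : κ ⊕ γ ≃ ι) (D : Matrix γ κ R)

/-- In the coordinates of `ι` ordered by `ρ`, this is the matrix `[D | 1]`. -/
def kernelNormalForm [DecidableEq γ] : Matrix γ ι R := (fromCols D 1).submatrix id ρ.symm

/-- In the coordinates of `ι` ordered by `ρ`, this is the matrix `[1; -D]`. -/
def imageNormalForm [DecidableEq κ] : Matrix ι κ R := (fromRows 1 (-D)).submatrix ρ.symm id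

theorem kernelNormalForm_submatrix_inr [DecidableEq γ] :
    (kernelNormalForm ρ D).submatrix id (ρ ∘ Sum.inr) = 1 := by
  ext i j
  simp [kernelNormalForm]

theorem imageNormalForm_submatrix_inl [DecidableEq κ] :
    (imageNormalForm ρ D).submatrix (ρ ∘ Sum.inl) id = 1 := by
  ext i j
  simp [imageNormalForm]

theorem linearIndependent_kernelNormalForm [Fintype γ] [DecidableEq γ] :
    LinearIndependent R (kernelNormalForm ρ D) :=
  linearIndependent_of_submatrix_eq_one (kernelNormalForm_submatrix_inr ρ D)

theorem linearIndependent_imageNormalForm_transpose [Fintype κ] [DecidableEq κ] :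
    LinearIndependent R (imageNormalForm ρ D)ᵀ := by
  refine linearIndependent_of_submatrix_eq_one (c := ρ ∘ Sum.inl) ?_
  rw [← transpose_submatrix, imageNormalForm_submatrix_inl, transpose_one]

theorem eq_kernelNormalForm [DecidableEq γ] {E : Matrix γ ι R}
    (h : E.submatrix id (ρ ∘ Sum.inr) = 1) :
    E = kernelNormalForm ρ (E.submatrix id (ρ ∘ Sum.inl)) := by
  ext i j
  obtain ⟨k | k, rfl⟩ := ρ.surjective j
  · simp [kernelNormalForm]
  · simpa [kernelNormalForm] using congrFun (congrFun h i) k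

theorem eq_imageNormalForm [DecidableEq κ] {B : Matrix ι κ R}
    (h : B.submatrix (ρ ∘ Sum.inl) id = 1) :
    B = imageNormalForm ρ (-B.submatrix (ρ ∘ Sum.inr) id) := by
  ext i j
  obtain ⟨k | k, rfl⟩ := ρ.surjective i
  · simpa [imageNormalForm] using congrFun (congrFun h k) j
  · simp [imageNormalForm]

theorem kernelNormalForm_mulVec [Fintype κ] [Fintype γ] [DecidableEq γ] [Fintype ι]
    (y : ι → R) :
    kernelNormalForm ρ D *ᵥ y = D *ᵥ (y ∘ ρ ∘ Sum.inl) + y ∘ ρ ∘ Sum.inr := by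
  rw [kernelNormalForm, submatrix_mulVec_equiv, fromCols_mulVec, one_mulVec]
  rfl

theorem imageNormalForm_mulVec [Fintype κ] [DecidableEq κ] (x : κ → R) :
    imageNormalForm ρ D *ᵥ x = Sum.elim x (-(D *ᵥ x)) ∘ ρ.symm := by
  change (fromRows 1 (-D) *ᵥ x) ∘ ρ.symm = _
  rw [fromRows_mulVec, one_mulVec, neg_mulVec]

theorem range_imageNormalForm [Fintype κ] [Fintype γ] [DecidableEq κ] [DecidableEq γ]
    [Fintype ι] :
    LinearMap.range (imageNormalForm ρ D).mulVecLin =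
      LinearMap.ker (kernelNormalForm ρ D).mulVecLin := by
  ext y
  simp only [LinearMap.mem_range, LinearMap.mem_ker, mulVecLin_apply, kernelNormalForm_mulVec,
    imageNormalForm_mulVec]
  constructor
  · rintro ⟨x, rfl⟩
    have hx : (Sum.elim x (-(D *ᵥ x)) ∘ ρ.symm) ∘ ρ = Sum.elim x (-(D *ᵥ x)) := by
      rw [comp_assoc, ρ.symm_comp_self, comp_id]
    rw [← comp_assoc _ ρ, ← comp_assoc _ ρ, hx, Sum.elim_comp_inl, Sum.elim_comp_inr,
      add_neg_cancel]
  · intro hy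
    refine ⟨y ∘ ρ ∘ Sum.inl, ?_⟩
    rw [← eq_neg_of_add_eq_zero_right hy]
    ext i
    obtain ⟨k | k, rfl⟩ := ρ.surjective i <;> simp

theorem associated_det_imageNormalForm_kernelNormalForm [Fintype κ] [Fintype γ]
    [DecidableEq κ] [DecidableEq γ] (r : κ → ι) (c : γ → ι) (h : Bijective (Sum.elim r c)) :
    Associated ((imageNormalForm ρ D).submatrix r id).det
      ((kernelNormalForm ρ D).submatrix id c).det := by
  refine associated_det_submatrix_fromRows_fromCols D (ρ.symm ∘ r) (ρ.symm ∘ c) ?_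
  rw [← Sum.comp_elim]
  exact ρ.symm.bijective.comp h

end NormalForm

theorem exists_kernel_presentation_of_unimodular {n m : ℕ} (B : Matrix (Fin n) (Fin m) ℤ)
    (hli : LinearIndependent ℤ Bᵀ)
    (hmin : ∀ r : Fin m ↪ Fin n, (B.submatrix r id).det ∈ ({0, 1, -1} : Set ℤ)) :
    ∃ (d : ℕ) (A : Matrix (Fin d) (Fin n) ℤ), LinearIndependent ℤ A ∧
      (∃ m : ℤ, ∀ c : Fin d ↪ Fin n, (A.submatrix id c).det ∈ ({0, m, -m} : Set ℤ)) ∧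
      LinearMap.range B.mulVecLin = LinearMap.ker A.mulVecLin := by
  obtain ⟨r₀, hr₀⟩ : ∃ r₀ : Fin m ↪ Fin n, (B.submatrix r₀ id).det ≠ 0 := by
    obtain ⟨r₀, h⟩ := hli.exists_det_submatrix_ne_zero
    exact ⟨r₀, by rwa [← transpose_submatrix, det_transpose] at h⟩
  set B₀ := B.submatrix r₀ id
  have hB₀inv : IsUnit B₀⁻¹.det := by
    have h := hmin r₀
    simp only [Set.mem_insert_iff, Set.mem_singleton_iff] at h
    exact isUnit_nonsing_inv_det B₀ (Int.isUnit_iff.2 (h.resolve_left hr₀))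
  have hminB' : ∀ r : Fin m ↪ Fin n,
      ((B * B₀⁻¹).submatrix r id).det ∈ ({0, 1, -1} : Set ℤ) := by
    intro r
    refine Int.mem_zero_pm_of_associated ?_ (hmin r)
    rw [show (B * B₀⁻¹).submatrix r id = B.submatrix r id * B₀⁻¹ from rfl, det_mul]
    exact (associated_mul_unit_left _ _ hB₀inv).symm
  have hmn : m ≤ n := by simpa using Fintype.card_le_of_embedding r₀
  obtain ⟨w, hw⟩ := r₀.exists_bijective_sumElim_right (γ := Fin (n - m)) (by simp; omega)
  set ρ := Equiv.ofBijective _ hw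
  have hB' : (B * B₀⁻¹).submatrix (ρ ∘ Sum.inl) id = 1 :=
    mul_nonsing_inv B₀ (isUnit_nonsing_inv_det_iff.1 hB₀inv)
  set D := -(B * B₀⁻¹).submatrix (ρ ∘ Sum.inr) id
  rw [eq_imageNormalForm ρ hB'] at hminB'
  refine ⟨n - m, kernelNormalForm ρ D, linearIndependent_kernelNormalForm ρ D,
    ⟨1, fun c => ?_⟩, ?_⟩
  · obtain ⟨r, hr⟩ := c.exists_bijective_sumElim_left (κ := Fin m) (by simp; omega)
    exact Int.mem_zero_pm_of_associated
      (associated_det_imageNormalForm_kernelNormalForm ρ D r c hr) (hminB' r)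
  · rw [← range_imageNormalForm, ← eq_imageNormalForm ρ hB',
      range_mulVecLin_mul_of_isUnit_det _ hB₀inv]

theorem exists_unimodular_image_presentation_of_kernel {n d : ℕ} (A : Matrix (Fin d) (Fin n) ℤ)
    (hli : LinearIndependent ℤ A) (m : ℤ)
    (hmin : ∀ c : Fin d ↪ Fin n, (A.submatrix id c).det ∈ ({0, m, -m} : Set ℤ)) :
    ∃ (k : ℕ) (B : Matrix (Fin n) (Fin k) ℤ), LinearIndependent ℤ Bᵀ ∧
      (∀ r : Fin k ↪ Fin n, (B.submatrix r id).det ∈ ({0, 1, -1} : Set ℤ)) ∧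
      LinearMap.ker A.mulVecLin = LinearMap.range B.mulVecLin := by
  obtain ⟨c₀, hc₀⟩ := hli.exists_det_submatrix_ne_zero
  have hdvd : ∀ c : Fin d → Fin n, (A.submatrix id c₀).det ∣ (A.submatrix id c).det := by
    intro c
    by_cases hc : Injective c
    · exact Int.dvd_of_mem_zero_pm (hmin c₀) hc₀ (hmin ⟨c, hc⟩)
    · rw [det_submatrix_eq_zero_of_not_injective A hc]
      exact dvd_zero _
  obtain ⟨E, hE₀, hAE⟩ := exists_eq_submatrix_mul_of_det_dvd A c₀ hc₀ hdvd
  have hminE : ∀ c : Fin d ↪ Fin n, (E.submatrix id c).det ∈ ({0, 1, -1} : Set ℤ) := by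
    intro c
    have hAc :
        (A.submatrix id c).det = (A.submatrix id c₀).det * (E.submatrix id c).det := by
      conv_lhs => rw [hAE]
      exact det_mul _ _
    exact Int.mem_zero_one_neg_one_of_mul_mem (hmin c₀) hc₀ (hAc ▸ hmin c)
  have hdn : d ≤ n := by simpa using Fintype.card_le_of_embedding c₀
  obtain ⟨w, hw⟩ := c₀.exists_bijective_sumElim_left (κ := Fin (n - d)) (by simp; omega)
  set ρ := Equiv.ofBijective _ hw
  have hE : E.submatrix id (ρ ∘ Sum.inr) = 1 := hE₀
  set D := E.submatrix id (ρ ∘ Sum.inl)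
  rw [eq_kernelNormalForm ρ hE] at hminE
  refine ⟨n - d, imageNormalForm ρ D, linearIndependent_imageNormalForm_transpose ρ D,
    fun r => ?_, ?_⟩
  · obtain ⟨c, hc⟩ := r.exists_bijective_sumElim_right (γ := Fin d) (by simp; omega)
    exact Int.mem_zero_pm_of_associated
      (associated_det_imageNormalForm_kernelNormalForm ρ D r c hc).symm (hminE c)
  · rw [range_imageNormalForm, ← eq_kernelNormalForm ρ hE, hAE,
      ker_mulVecLin_mul_of_det_ne_zero hc₀]

/-- For a subgroup (lattice) `L ⊆ ℤ^n`, condition (d) — `L` is the image of an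
integer `n × m` matrix `B` with linearly independent columns all of whose maximal (`m × m`)
minors lie in `{0, 1, -1}` — is equivalent to condition (e) — `L` is the kernel of an integer
`d × n` matrix `A` with linearly independent rows such that all maximal (`d × d`) minors of `A`
lie in `{0, m, -m}` for some integer `m`. -/
theorem lawrence_unimodular_image_iff_kernel {n : ℕ} (L : Submodule ℤ (Fin n → ℤ)) :
    (∃ (m : ℕ) (B : Matrix (Fin n) (Fin m) ℤ),
      LinearIndependent ℤ B.transpose ∧
      (∀ r : Fin m ↪ Fin n, (B.submatrix r id).det ∈ ({0, 1, -1} : Set ℤ)) ∧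
      L = LinearMap.range B.mulVecLin) ↔
    (∃ (d : ℕ) (A : Matrix (Fin d) (Fin n) ℤ),
      LinearIndependent ℤ A ∧
      (∃ m : ℤ, ∀ c : Fin d ↪ Fin n, (A.submatrix id c).det ∈ ({0, m, -m} : Set ℤ)) ∧
      L = LinearMap.ker A.mulVecLin) := by
  constructor
  · rintro ⟨m, B, hli, hmin, rfl⟩
    exact exists_kernel_presentation_of_unimodular B hli hmin
  · rintro ⟨d, A, hli, ⟨m, hmin⟩, rfl⟩
    exact exists_unimodular_image_presentation_of_kernel A hli m hmin
end

section
/- A subgroup L of ℤ^n is unimodular if and only if every Graver element v of L satisfies v ∈ {−1, 0, 1}^n, i.e., every coordinate of every Graver element is −1, 0 or 1. -/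
/-!
If every Graver element of `L` is a `{0, ±1}`-vector and `M` is a nonsingular maximal minor of a
basis matrix `B`, on rows `r`, then `B (adj M) eᵢ ∈ L` restricts to `det M • eᵢ` on the rows `r`. A
Graver element conformal to it and nonzero in row `r i` restricts to `±eᵢ`, so `M` has an integral
right inverse and `det M = ±1`.

Conversely, let all maximal minors of `B` lie in `{0, ±1}` and let `v = B x` be a Graver element
with some `|v i| ≥ 2`. The box `{t | ⌊v / 2⌋ ≤ B t ≤ ⌈v / 2⌉}` contains `x / 2`, hence a vertex `t`,
at which the tight rows span. Then `M t = c` for a nonsingular maximal minor `M` and an integral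
`c`, so `t` is integral, and `B t ∈ L` is conformal to `v` but is neither `0` nor `v`.
-/

/-- A sublattice `L ⊆ ℤ^ι` is *unimodular* if it is the image of an injective linear map given
by an integer matrix `B` with linearly independent columns, all of whose maximal minors lie in
`{0, 1, -1}`. -/
def IsUnimodular {ι : Type*} [Fintype ι] (L : Submodule ℤ (ι → ℤ)) : Prop :=
  ∃ (m : ℕ) (B : Matrix ι (Fin m) ℤ),
    LinearIndependent ℤ B.transpose ∧
    (∀ r : Fin m ↪ ι, (B.submatrix r id).det ∈ ({0, 1, -1} : Set ℤ)) ∧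
    L = LinearMap.range B.mulVecLin

/-- `v` is a Graver element of `L`: `v` is a nonzero element of `L` such that the only nonzero
`w ∈ L` with `w⁺ ≤ v⁺` and `w⁻ ≤ v⁻` coordinatewise is `w = v`. -/
def IsGraver {n : ℕ} (L : Submodule ℤ (Fin n → ℤ)) (v : Fin n → ℤ) : Prop :=
  v ∈ L ∧ v ≠ 0 ∧ ∀ w ∈ L, w ≠ 0 →
    (∀ i, (w i).toNat ≤ (v i).toNat) → (∀ i, (-w i).toNat ≤ (-v i).toNat) → w = v

open Matrix Module Set

section Conformal

variable {ι : Type*}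

def IsConformal (w v : ι → ℤ) : Prop :=
  (∀ i, (w i).toNat ≤ (v i).toNat) ∧ ∀ i, (-w i).toNat ≤ (-v i).toNat

namespace IsConformal

variable {u w v : ι → ℤ}

theorem refl (v : ι → ℤ) : IsConformal v v := ⟨fun _ ↦ le_rfl, fun _ ↦ le_rfl⟩

theorem trans (huw : IsConformal u w) (hwv : IsConformal w v) : IsConformal u v :=
  ⟨fun i ↦ (huw.1 i).trans (hwv.1 i), fun i ↦ (huw.2 i).trans (hwv.2 i)⟩

theorem sub_left (h : IsConformal w v) : IsConformal (v - w) v :=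
  ⟨fun i ↦ by have := h.1 i; have := h.2 i; simp only [Pi.sub_apply]; omega,
   fun i ↦ by have := h.1 i; have := h.2 i; simp only [Pi.sub_apply]; omega⟩

theorem apply_eq_zero (h : IsConformal w v) {i : ι} (hi : v i = 0) : w i = 0 := by
  have := h.1 i; have := h.2 i; omega

theorem sum_natAbs_lt [Fintype ι] (h : IsConformal w v) (hne : w ≠ v) :
    ∑ i, (w i).natAbs < ∑ i, (v i).natAbs := by
  obtain ⟨i, hi⟩ := Function.ne_iff.1 hne
  refine Finset.sum_lt_sum (fun j _ ↦ ?_) ⟨i, Finset.mem_univ i, ?_⟩ <;>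
  · have := h.1 ‹_›; have := h.2 ‹_›; omega

end IsConformal

end Conformal

section Graver

variable {n : ℕ} {L : Submodule ℤ (Fin n → ℤ)}

theorem exists_isConformal_ne_of_not_isGraver {v : Fin n → ℤ} (hv : v ∈ L) (hv0 : v ≠ 0)
    (h : ¬IsGraver L v) : ∃ w ∈ L, w ≠ 0 ∧ IsConformal w v ∧ w ≠ v := by
  contrapose! h
  exact ⟨hv, hv0, fun w hw hw0 h₁ h₂ ↦ h w hw hw0 ⟨h₁, h₂⟩⟩

theorem exists_isGraver_isConformal_apply_ne_zero {v : Fin n → ℤ} (hv : v ∈ L) {j : Fin n}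
    (hj : v j ≠ 0) :
    ∃ g, IsGraver L g ∧ IsConformal g v ∧ g j ≠ 0 := by
  by_cases hg : IsGraver L v
  · exact ⟨v, hg, .refl v, hj⟩
  obtain ⟨w, hw, hw0, hwv, hne⟩ :=
    exists_isConformal_ne_of_not_isGraver hv (fun h ↦ hj (congrFun h j)) hg
  by_cases hwj : w j = 0
  · have hlt := hwv.sub_left.sum_natAbs_lt fun h ↦ hw0 (by simpa using h)
    obtain ⟨g, hg, hgv, hgj⟩ := exists_isGraver_isConformal_apply_ne_zero (L.sub_mem hv hw)
      (j := j) (by simpa [hwj] using hj)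
    exact ⟨g, hg, hgv.trans hwv.sub_left, hgj⟩
  · have hlt := hwv.sum_natAbs_lt hne
    obtain ⟨g, hg, hgv, hgj⟩ := exists_isGraver_isConformal_apply_ne_zero hw hwj
    exact ⟨g, hg, hgv.trans hwv, hgj⟩
termination_by ∑ i, (v i).natAbs

end Graver

theorem Matrix.isUnit_of_forall_exists_mulVec_eq_single {R κ : Type*} [CommRing R] [Fintype κ]
    [DecidableEq κ] {M : Matrix κ κ R} (h : ∀ i, ∃ s, M *ᵥ s = Pi.single i 1) : IsUnit M := by
  choose s hs using h
  refine (isUnit_iff_isUnit_det M).2 (isUnit_det_of_right_inverse (B := (of s)ᵀ) ?_)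
  ext k i
  simpa [mul_apply, mulVec, dotProduct, one_apply, Pi.single_apply, eq_comm] using
    congrFun (hs i) k

theorem exists_linearIndependent_matrix_range_eq {ι : Type*} [Fintype ι]
    (L : Submodule ℤ (ι → ℤ)) : ∃ (m : ℕ) (B : Matrix ι (Fin m) ℤ),
      LinearIndependent ℤ Bᵀ ∧ L = LinearMap.range B.mulVecLin := by
  obtain ⟨m, b⟩ := Submodule.basisOfPid (Pi.basisFun ℤ ι) L
  have hcol : (of fun i j ↦ (b j : ι → ℤ) i).col = L.subtype ∘ b := rfl
  refine ⟨m, of fun i j ↦ (b j : ι → ℤ) i, b.linearIndependent.map' L.subtype L.ker_subtype, ?_⟩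
  rw [range_mulVecLin, hcol, Set.range_comp, ← Submodule.map_span, b.span_eq,
    Submodule.map_top, Submodule.range_subtype]

section GraverToUnimodular

variable {n m : ℕ} {L : Submodule ℤ (Fin n → ℤ)} {B : Matrix (Fin n) (Fin m) ℤ}

theorem exists_mulVec_submatrix_eq_single (hL : L = LinearMap.range B.mulVecLin)
    (hG : ∀ v, IsGraver L v → ∀ i, v i ∈ ({-1, 0, 1} : Set ℤ)) (r : Fin m ↪ Fin n)
    (hdet : (B.submatrix r id).det ≠ 0) (i : Fin m) :
    ∃ s, B.submatrix r id *ᵥ s = Pi.single i 1 := by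
  set M := B.submatrix r id
  have hrows (y : Fin m → ℤ) (k : Fin m) : (B *ᵥ y) (r k) = (M *ᵥ y) k := rfl
  set y := adjugate M *ᵥ Pi.single i 1
  have hy (k : Fin m) : (B *ᵥ y) (r k) = M.det * (Pi.single i 1 : Fin m → ℤ) k := by
    rw [hrows, mulVec_mulVec, mul_adjugate, smul_mulVec, one_mulVec, Pi.smul_apply, smul_eq_mul]
  have hyL : B *ᵥ y ∈ L := hL ▸ ⟨y, rfl⟩
  obtain ⟨g, hg, hgy, hgi⟩ :=
    exists_isGraver_isConformal_apply_ne_zero hyL (j := r i) (by simp [hy, hdet])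
  obtain ⟨s, rfl⟩ : g ∈ LinearMap.range B.mulVecLin := hL ▸ hg.1
  have hsq : (B *ᵥ s) (r i) * (B *ᵥ s) (r i) = 1 := by
    rcases hG _ hg (r i) with h | h | h <;> simp_all
  refine ⟨(B *ᵥ s) (r i) • s, funext fun k ↦ ?_⟩
  rw [mulVec_smul, Pi.smul_apply, ← hrows, smul_eq_mul]
  by_cases hk : k = i
  · simp [hk, hsq]
  · have : (B *ᵥ s) (r k) = 0 := hgy.apply_eq_zero (by simp [hy, hk])
    simp [hk, this]

theorem det_submatrix_mem_of_isGraver (hL : L = LinearMap.range B.mulVecLin)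
    (hG : ∀ v, IsGraver L v → ∀ i, v i ∈ ({-1, 0, 1} : Set ℤ)) (r : Fin m ↪ Fin n) :
    (B.submatrix r id).det ∈ ({0, 1, -1} : Set ℤ) := by
  by_cases hdet : (B.submatrix r id).det = 0
  · exact Or.inl hdet
  have := (isUnit_iff_isUnit_det _).1 <|
    isUnit_of_forall_exists_mulVec_eq_single (exists_mulVec_submatrix_eq_single hL hG r hdet)
  exact Or.inr (Int.isUnit_iff.1 this)

end GraverToUnimodular

theorem exists_ne_zero_forall_dotProduct_eq_zero {K κ : Type*} [Field K] [Fintype κ]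
    {p : Submodule K (κ → K)} (hp : p ≠ ⊤) : ∃ c ≠ 0, ∀ x ∈ p, x ⬝ᵥ c = 0 := by
  classical
  obtain ⟨f, hf0, hpf⟩ := p.exists_le_ker_of_lt_top hp.lt_top
  set c : κ → K := fun j ↦ f fun k ↦ if j = k then 1 else 0
  have hf (x : κ → K) : f x = x ⬝ᵥ c := by
    simp [LinearMap.pi_apply_eq_sum_univ f x, dotProduct, c]
  refine ⟨c, fun hc ↦ hf0 (LinearMap.ext fun x ↦ ?_), fun x hx ↦ (hf x).symm.trans (hpf hx)⟩
  simp [hf, hc]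

section ExitTime

variable {K : Type*} [Field K] [LinearOrder K]

/-- The time at which `a + s * δ` leaves `Icc lo hi`; it is `0` when `δ = 0`. -/
def exitTimeIcc (lo hi a δ : K) : K := ((if 0 < δ then hi else lo) - a) / δ

variable {lo hi a δ s : K}

theorem add_exitTimeIcc_mul (hδ : δ ≠ 0) :
    a + exitTimeIcc lo hi a δ * δ = lo ∨ a + exitTimeIcc lo hi a δ * δ = hi := by
  unfold exitTimeIcc
  split_ifs <;> simp [div_mul_cancel₀ _ hδ]

variable [IsStrictOrderedRing K]

theorem exitTimeIcc_nonneg (ha : a ∈ Icc lo hi) : 0 ≤ exitTimeIcc lo hi a δ := by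
  unfold exitTimeIcc
  split_ifs with hδ
  · exact div_nonneg (by linarith [ha.2]) hδ.le
  · exact div_nonneg_of_nonpos (by linarith [ha.1]) (not_lt.1 hδ)

theorem add_mul_mem_Icc_of_le_exitTimeIcc (ha : a ∈ Icc lo hi) (hs0 : 0 ≤ s)
    (hs : s ≤ exitTimeIcc lo hi a δ) : a + s * δ ∈ Icc lo hi := by
  unfold exitTimeIcc at hs
  rcases lt_trichotomy δ 0 with hδ | rfl | hδ
  · rw [if_neg hδ.not_gt, le_div_iff_of_neg hδ] at hs
    constructor <;> nlinarith [ha.1, ha.2]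
  · simpa using ha
  · rw [if_pos hδ, le_div_iff₀ hδ] at hs
    constructor <;> nlinarith [ha.1, ha.2]

end ExitTime

theorem exists_embedding_linearIndependent_of_span_eq_top {K V ι : Type*} [DivisionRing K]
    [AddCommGroup V] [Module K V] [FiniteDimensional K V] {m : ℕ} (hm : finrank K V = m)
    (v : ι → V) (hv : Submodule.span K (range v) = ⊤) :
    ∃ r : Fin m ↪ ι, LinearIndependent K (v ∘ r) := by
  obtain ⟨κ, a, ha, hspan, hli⟩ := exists_linearIndependent' K v
  let b := Basis.mk hli (by rw [hspan, hv])
  have := Module.Finite.finite_basis b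
  let e := Finite.equivFinOfCardEq ((Module.finrank_eq_nat_card_basis b).symm.trans hm)
  exact ⟨e.symm.toEmbedding.trans ⟨a, ha⟩, hli.comp e.symm e.symm.injective⟩

section Vertex

variable {K ι κ : Type*} [Field K] [Fintype κ]

def tightRows (A : Matrix ι κ K) (l u : ι → K) (t : κ → K) : Set ι :=
  {i | (A *ᵥ t) i = l i ∨ (A *ᵥ t) i = u i}

def tightSpan (A : Matrix ι κ K) (l u : ι → K) (t : κ → K) : Submodule K (κ → K) :=
  Submodule.span K (A.row '' tightRows A l u t)

variable [LinearOrder K] [IsStrictOrderedRing K] [Fintype ι] {A : Matrix ι κ K} {l u : ι → K}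

theorem exists_tightSpan_lt (hA : Function.Injective A.mulVec) {t : κ → K}
    (ht : A *ᵥ t ∈ Icc l u) (htop : tightSpan A l u t ≠ ⊤) :
    ∃ t', A *ᵥ t' ∈ Icc l u ∧ tightSpan A l u t < tightSpan A l u t' := by
  classical
  obtain ⟨c, hc0, hc⟩ := exists_ne_zero_forall_dotProduct_eq_zero htop
  set d := A *ᵥ c
  have hd_tight (i) (hi : i ∈ tightRows A l u t) : d i = 0 :=
    hc _ (Submodule.subset_span ⟨i, hi, rfl⟩)
  obtain ⟨i₀, hi₀⟩ : ∃ i, d i ≠ 0 :=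
    Function.ne_iff.1 fun h ↦ hc0 (hA (by rw [mulVec_zero]; exact h))
  -- move from `t` along `c` until the first constraint whose row is not orthogonal to `c` is hit
  set τ := fun i ↦ exitTimeIcc (l i) (u i) ((A *ᵥ t) i) (d i)
  obtain ⟨i₁, hi₁, hmin⟩ :=
    (Finset.univ.filter (d · ≠ 0)).exists_min_image τ ⟨i₀, by simpa using hi₀⟩
  have hi₁ : d i₁ ≠ 0 := by simpa using hi₁
  have ht' (i) : (A *ᵥ (t + τ i₁ • c)) i = (A *ᵥ t) i + τ i₁ * d i := by
    simp [mulVec_add, mulVec_smul, d]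
  simp only [← pi_univ_Icc, mem_univ_pi] at ht ⊢
  refine ⟨t + τ i₁ • c, fun i ↦ ?_, SetLike.lt_iff_le_and_exists.2 ⟨?_, ?_⟩⟩
  · rw [ht']
    by_cases hi : d i = 0
    · simpa [hi] using ht i
    exact add_mul_mem_Icc_of_le_exitTimeIcc (ht i) (exitTimeIcc_nonneg (ht i₁))
      (hmin i (by simpa using hi))
  · refine Submodule.span_mono (image_mono fun i hi ↦ ?_)
    simpa only [tightRows, mem_ofPred_eq, ht', hd_tight i hi, mul_zero, add_zero] using hi
  · refine ⟨A.row i₁, Submodule.subset_span ⟨i₁, ?_, rfl⟩, fun hmem ↦ hi₁ (hc _ hmem)⟩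
    simpa only [tightRows, mem_ofPred_eq, ht'] using add_exitTimeIcc_mul hi₁

theorem exists_mulVec_mem_Icc_tightSpan_eq_top (hA : Function.Injective A.mulVec)
    {t : κ → K} (ht : A *ᵥ t ∈ Icc l u) :
    ∃ t', A *ᵥ t' ∈ Icc l u ∧ tightSpan A l u t' = ⊤ := by
  obtain ⟨_, ⟨t', ht', rfl⟩, hmax⟩ :=
    wellFounded_gt.has_min (tightSpan A l u '' {t | A *ᵥ t ∈ Icc l u}) ⟨_, t, ht, rfl⟩
  refine ⟨t', ht', by_contra fun htop ↦ ?_⟩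
  obtain ⟨t'', ht'', hlt⟩ := exists_tightSpan_lt hA ht' htop
  exact hmax _ ⟨t'', ht'', rfl⟩ hlt

end Vertex

theorem Matrix.injective_mulVec_map_algebraMap {R K ι κ : Type*} [CommRing R] [IsDomain R]
    [Field K] [Algebra R K] [IsFractionRing R K] [Fintype κ] {B : Matrix ι κ R}
    (hB : Function.Injective B.mulVec) : Function.Injective (B.map (algebraMap R K)).mulVec := by
  rw [mulVec_injective_iff] at hB ⊢
  rw [← LinearIndependent.iff_fractionRing R K]
  refine hB.map' ((Algebra.linearMap R K).compLeft ι) (LinearMap.ker_eq_bot.2 fun x y h ↦ ?_)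
  exact funext fun i ↦ IsFractionRing.injective R K (congrFun h i)

section Integrality

variable {ι κ : Type*}

theorem Matrix.eq_intCast_comp_of_mulVec_eq [Fintype κ] [DecidableEq κ] {M : Matrix κ κ ℤ}
    (hM : IsUnit M.det) {t : κ → ℚ} {c : κ → ℤ} (h : M.map (Int.castRingHom ℚ) *ᵥ t = (↑) ∘ c) :
    t = (↑) ∘ (M⁻¹ *ᵥ c) := by
  have hMℚ : IsUnit (M.map (Int.castRingHom ℚ)) :=
    ((isUnit_iff_isUnit_det M).2 hM).map (Int.castRingHom ℚ).mapMatrix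
  have hc : M.map (Int.castRingHom ℚ) *ᵥ (Int.castRingHom ℚ ∘ (M⁻¹ *ᵥ c)) =
      Int.castRingHom ℚ ∘ c := funext fun i ↦ by
    rw [← RingHom.map_mulVec, mulVec_mulVec, mul_nonsing_inv _ hM, one_mulVec]
    rfl
  exact mulVec_injective_iff_isUnit.2 hMℚ (h.trans hc.symm)

variable {m : ℕ} {B : Matrix ι (Fin m) ℤ}

theorem isUnit_det_submatrix_of_linearIndependent
    (hminor : ∀ r : Fin m ↪ ι, (B.submatrix r id).det ∈ ({0, 1, -1} : Set ℤ)) {r : Fin m ↪ ι}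
    (hr : LinearIndependent ℚ ((B.map (Int.castRingHom ℚ)).row ∘ r)) :
    IsUnit (B.submatrix r id).det := by
  have hMℚ : IsUnit ((B.submatrix r id).map (Int.castRingHom ℚ)) :=
    linearIndependent_rows_iff_isUnit.1 hr
  have hdet : (B.submatrix r id).det ≠ 0 := fun h ↦ by
    have := (isUnit_iff_isUnit_det _).1 hMℚ
    rw [← RingHom.mapMatrix_apply, ← RingHom.map_det, h, map_zero] at this
    exact not_isUnit_zero this
  exact Int.isUnit_iff.2 ((hminor r).resolve_left hdet)

theorem exists_mulVec_mem_Icc_of_rat [Fintype ι] (hB : Function.Injective B.mulVec)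
    (hminor : ∀ r : Fin m ↪ ι, (B.submatrix r id).det ∈ ({0, 1, -1} : Set ℤ)) {l u : ι → ℤ}
    {t : Fin m → ℚ} (ht : B.map (Int.castRingHom ℚ) *ᵥ t ∈ Icc ((↑) ∘ l) ((↑) ∘ u)) :
    ∃ s, B *ᵥ s ∈ Icc l u := by
  classical
  set A := B.map (Int.castRingHom ℚ)
  have hA : Function.Injective A.mulVec := injective_mulVec_map_algebraMap hB
  obtain ⟨t, ht, htop⟩ := exists_mulVec_mem_Icc_tightSpan_eq_top hA ht
  obtain ⟨r, hr⟩ := exists_embedding_linearIndependent_of_span_eq_top (finrank_fin_fun ℚ)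
    (fun i : tightRows A _ _ t ↦ A.row i) (by rw [← image_eq_range]; exact htop)
  set r' := r.trans (Function.Embedding.subtype _)
  -- `t` solves a square subsystem with unimodular matrix and integral right-hand side
  have htight (j) : ∃ z : ℤ, (A *ᵥ t) (r' j) = z := (r j).2.elim (⟨l _, ·⟩) (⟨u _, ·⟩)
  choose c hc using htight
  have hM := isUnit_det_submatrix_of_linearIndependent hminor (r := r') hr
  have hs : t = (↑) ∘ ((B.submatrix r' id)⁻¹ *ᵥ c) := eq_intCast_comp_of_mulVec_eq hM (funext hc)
  refine ⟨(B.submatrix r' id)⁻¹ *ᵥ c, ?_⟩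
  simp only [← pi_univ_Icc, mem_univ_pi] at ht ⊢
  intro i
  have hi : (((B *ᵥ ((B.submatrix r' id)⁻¹ *ᵥ c)) i : ℤ) : ℚ) = (A *ᵥ t) i := by
    rw [hs]; exact (Int.castRingHom ℚ).map_mulVec B _ i
  have := ht i
  rw [← hi] at this
  exact ⟨Int.cast_le.1 this.1, Int.cast_le.1 this.2⟩

end Integrality

section UnimodularToGraver

theorem intCast_div_two_mem_Icc (a : ℤ) :
    (a : ℚ) / 2 ∈ Icc ((a / 2 : ℤ) : ℚ) ((a - a / 2 : ℤ) : ℚ) := by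
  have h₁ : 2 * (a / 2) ≤ a := by omega
  have h₂ : a ≤ 2 * (a - a / 2) := by omega
  qify at h₁ h₂
  push_cast
  constructor <;> linarith

theorem isConformal_of_mem_Icc_half {ι : Type*} {v w : ι → ℤ}
    (h : w ∈ Icc (fun i ↦ v i / 2) (fun i ↦ v i - v i / 2)) : IsConformal w v :=
  have h₁ (i : ι) : v i / 2 ≤ w i := h.1 i
  have h₂ (i : ι) : w i ≤ v i - v i / 2 := h.2 i
  ⟨fun i ↦ by have := h₁ i; have := h₂ i; omega, fun i ↦ by have := h₁ i; have := h₂ i; omega⟩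

variable {n : ℕ} {L : Submodule ℤ (Fin n → ℤ)}

theorem IsGraver.apply_mem_of_isUnimodular (hL : IsUnimodular L) {v : Fin n → ℤ}
    (hv : IsGraver L v) (i : Fin n) : v i ∈ ({-1, 0, 1} : Set ℤ) := by
  obtain ⟨m, B, hind, hminor, rfl⟩ := hL
  obtain ⟨x, hx : B *ᵥ x = v⟩ := hv.1
  -- `x / 2` lies in the box `⌊v / 2⌋ ≤ B t ≤ ⌈v / 2⌉`; integer division `v i / 2` rounds down
  have hhalf : B.map (Int.castRingHom ℚ) *ᵥ ((2 : ℚ)⁻¹ • ((↑) ∘ x)) ∈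
      Icc ((↑) ∘ fun i ↦ v i / 2) ((↑) ∘ fun i ↦ v i - v i / 2) := by
    have hj (j) : (B.map (Int.castRingHom ℚ) *ᵥ ((↑) ∘ x)) j = v j := by
      rw [← hx]; exact ((Int.castRingHom ℚ).map_mulVec B x j).symm
    simp only [← pi_univ_Icc, mem_univ_pi, mulVec_smul, Pi.smul_apply, smul_eq_mul]
    intro j
    rw [hj, inv_mul_eq_div]
    exact intCast_div_two_mem_Icc (v j)
  obtain ⟨s, hs⟩ := exists_mulVec_mem_Icc_of_rat (mulVec_injective_iff.2 hind) hminor hhalf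
  have hconf := isConformal_of_mem_Icc_half hs
  by_contra hi
  have hsi := hs.1 i
  have hsi' := hs.2 i
  have hne : (B *ᵥ s) i ≠ 0 ∧ (B *ᵥ s) i ≠ v i := by
    simp only [mem_insert_iff, mem_singleton_iff] at hi
    dsimp only at hsi hsi'
    omega
  exact hne.2 (congrFun (hv.2.2 _ ⟨s, rfl⟩ (fun h ↦ hne.1 (congrFun h i)) hconf.1 hconf.2) i)

end UnimodularToGraver

/-- `L` is unimodular iff every coordinate of every Graver element of `L` is
`-1`, `0` or `1`. -/
theorem isUnimodular_iff_graver_coords {n : ℕ} (L : Submodule ℤ (Fin n → ℤ)) :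
    IsUnimodular L ↔ ∀ v, IsGraver L v → ∀ i, v i ∈ ({-1, 0, 1} : Set ℤ) := by
  refine ⟨fun hL _ hv ↦ hv.apply_mem_of_isUnimodular hL, fun hG ↦ ?_⟩
  obtain ⟨m, B, hind, hL⟩ := exists_linearIndependent_matrix_range_eq L
  exact ⟨m, B, hind, det_submatrix_mem_of_isGraver hL hG, hL⟩
end

section
/- A subgroup L of ℤ^n is unimodular if and only if for every subset T ⊆ {1,…,n}, the quotient group ℤ^T / π_T(L) is torsion free, where π_T : ℤ^n → ℤ^T denotes the projection onto the coordinates indexed by T. -/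
/-!
Let `B` be an integer matrix whose columns form a basis of `L`, and `π_T` the projection to the
coordinates in `T`.

If all maximal minors of `B` lie in `{0, 1, -1}`, choose `m` rows `r` of `B` forming a basis of its
row space over `ℚ` and containing a basis of the rows indexed by `T`. The minor `A` on `r` is then a
unit, so `B * A⁻¹` spans `L` as well and has the identity matrix as its rows `r`; moreover each of
its rows indexed by `T` is supported on the coordinates `j` with `r j ∈ T`. An element of `π_T(L)`
is therefore determined by its coordinates `r j ∈ T`, and these can be prescribed arbitrarily, so
`k • y ∈ π_T(L)` with `k ≠ 0` forces `y ∈ π_T(L)`.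

Conversely, if `T` is the image of `r`, then `π_T(L)` is the image of the minor `A`, which contains
`det A • ℤ^m` by the adjugate formula. If `ℤ^T / π_T(L)` is torsion free and `det A ≠ 0`, then `A`
is surjective, so `det A = ±1`.
-/

open Matrix

variable {ι κ : Type*}

theorem Submodule.nsmulSaturated_iff_quotient {R M : Type*} [Ring R] [AddCommGroup M] [Module R M]
    (N : Submodule R M) :
    N.NSMulSaturated ↔ ∀ (x : M ⧸ N) (m : ℕ), m ≠ 0 → m • x = 0 → x = 0 := by
  refine ⟨fun h x m hm hx => ?_, fun h m y hy => ?_⟩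
  · induction x using Submodule.Quotient.induction_on with | H y => ?_
    rw [← Submodule.Quotient.mk_smul, Submodule.Quotient.mk_eq_zero] at hx
    rw [Submodule.Quotient.mk_eq_zero]
    exact (h hx).resolve_left hm
  · rw [or_iff_not_imp_left]
    intro hm
    rw [Submodule.mem_toAddSubmonoid, ← Submodule.Quotient.mk_eq_zero] at hy ⊢
    exact h _ m hm (by rwa [← Submodule.Quotient.mk_smul])

theorem Submodule.nsmulSaturated_comap {R M M' : Type*} [Ring R] [AddCommGroup M] [Module R M]
    [AddCommGroup M'] [Module R M'] {N : Submodule R M'} (hN : N.NSMulSaturated)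
    (f : M →ₗ[R] M') : (N.comap f).NSMulSaturated := fun m y hy => by
  simpa using hN (show m • f y ∈ N by simpa using hy)

theorem Matrix.linearIndependent_transpose_map_algebraMap {R K : Type*} [CommRing R] [IsDomain R]
    [Field K] [Algebra R K] [IsFractionRing R K] (B : Matrix ι κ R) (hB : LinearIndependent R Bᵀ) :
    LinearIndependent K (B.map (algebraMap R K))ᵀ :=
  (LinearIndependent.iff_fractionRing R K).1 <| hB.map' ((Algebra.linearMap R K).compLeft ι)
    (LinearMap.ker_eq_bot.2 (IsFractionRing.injective R K).comp_left)

theorem Matrix.span_row_eq_top {K : Type*} [Field K] [Finite ι] [Fintype κ]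
    (B : Matrix ι κ K) (hB : LinearIndependent K Bᵀ) :
    Submodule.span K (Set.range B.row) = ⊤ := by
  apply Submodule.eq_top_of_finrank_eq
  rw [← rank_eq_finrank_span_row, rank_eq_finrank_span_cols, finrank_span_eq_card (b := B.col) hB,
    Module.finrank_fintype_fun_eq_card]

theorem Matrix.exists_det_submatrix_ne_zero_and_mem_span {K : Type*} [Field K] [Finite ι]
    [Fintype κ] [DecidableEq κ] (B : Matrix ι κ K) (hB : LinearIndependent K Bᵀ) (T : Set ι) :
    ∃ r : κ ↪ ι, (B.submatrix r id).det ≠ 0 ∧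
      ∀ t ∈ T, B t ∈ Submodule.span K ((fun j => B (r j)) '' {j | r j ∈ T}) := by
  obtain ⟨s, hsT, -, hTs, hs⟩ :=
    exists_linearIndepOn_extension (v := B.row) (linearIndepOn_empty K _) (Set.empty_subset T)
  obtain ⟨b, -, hsb, hb_span, hb⟩ :=
    exists_linearIndepOn_extension hs (Set.subset_univ s)
  have hb_top : ⊤ ≤ Submodule.span K (Set.range fun i : b => B.row i) := by
    rw [← B.span_row_eq_top hB, ← Set.image_univ, ← Set.image_eq_range]
    exact Submodule.span_le.2 hb_span
  let e : κ ≃ b := ((Module.Basis.mk hb.linearIndependent hb_top).indexEquiv (Pi.basisFun K κ)).symm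
  refine ⟨e.toEmbedding.trans (Function.Embedding.subtype _), ?_, fun t ht => ?_⟩
  · rw [← isUnit_iff_ne_zero, ← isUnit_iff_isUnit_det, ← linearIndependent_rows_iff_isUnit]
    exact hb.linearIndependent.comp e e.injective
  · refine Submodule.span_mono ?_ (hTs ⟨t, ht, rfl⟩)
    rintro _ ⟨i, hi, rfl⟩
    exact ⟨e.symm ⟨i, hsb hi⟩, by simpa using hsT hi, by simp [Matrix.row]⟩

theorem Matrix.range_mulVecLin_mul_of_isUnit {R : Type*} [CommRing R] [Fintype κ] [DecidableEq κ]
    (B : Matrix ι κ R) {U : Matrix κ κ R} (hU : IsUnit U) :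
    LinearMap.range (B * U).mulVecLin = LinearMap.range B.mulVecLin := by
  rw [mulVecLin_mul, LinearMap.range_comp_of_range_eq_top]
  exact LinearMap.range_eq_top.2 (mulVec_surjective_iff_isUnit.2 hU)

theorem Matrix.mulVec_apply_of_submatrix_eq_one {R : Type*} [CommRing R] [Fintype κ] [DecidableEq κ]
    {C : Matrix ι κ R} {r : κ → ι} (hC : C.submatrix r id = 1) (w : κ → R) (j : κ) :
    (C *ᵥ w) (r j) = w j :=
  calc (C *ᵥ w) (r j) = (C.submatrix r id *ᵥ w) j := rfl
    _ = w j := by rw [hC, one_mulVec]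

theorem Matrix.apply_eq_zero_of_mem_span_rows {R : Type*} [CommRing R] [DecidableEq κ]
    {C : Matrix ι κ R} {r : κ → ι} (hC : C.submatrix r id = 1) {S : Set κ} {t : ι}
    (ht : C t ∈ Submodule.span R ((fun j => C (r j)) '' S)) {j₀ : κ} (hj₀ : j₀ ∉ S) :
    C t j₀ = 0 := by
  have hle : Submodule.span R ((fun j => C (r j)) '' S) ≤ LinearMap.ker (LinearMap.proj j₀) := by
    rw [Submodule.span_le]
    rintro _ ⟨j, hj, rfl⟩
    have hne : j ≠ j₀ := fun h => hj₀ (h ▸ hj)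
    simpa [hne] using congrFun (congrFun hC j) j₀
  exact hle ht

theorem Matrix.exists_range_eq_and_submatrix_eq_one [Finite ι] [Fintype κ] [DecidableEq κ]
    (B : Matrix ι κ ℤ) (hB : LinearIndependent ℤ Bᵀ)
    (hminor : ∀ r : κ ↪ ι, (B.submatrix r id).det ∈ ({0, 1, -1} : Set ℤ)) (T : Set ι) :
    ∃ (C : Matrix ι κ ℤ) (r : κ → ι), LinearMap.range C.mulVecLin = LinearMap.range B.mulVecLin ∧
      C.submatrix r id = 1 ∧ ∀ t ∈ T, ∀ j, r j ∉ T → C t j = 0 := by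
  let cast := algebraMap ℤ ℚ
  obtain ⟨r, hdet, hspan⟩ := (B.map cast).exists_det_submatrix_ne_zero_and_mem_span
    (B.linearIndependent_transpose_map_algebraMap hB) T
  set A := B.submatrix r id
  have hA : IsUnit A := by
    have hA0 : A.det ≠ 0 := fun h => hdet <| by
      change (A.map cast).det = 0
      simpa [h] using (cast.map_det A).symm
    rw [isUnit_iff_isUnit_det]
    obtain h | h | h : A.det = 0 ∨ A.det = 1 ∨ A.det = -1 := hminor r
    · exact absurd h hA0
    · simp [h]
    · simp [h]
  set U := (hA.unit⁻¹ : (Matrix κ κ ℤ)ˣ).val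
  have hC : (B * U).submatrix r id = 1 := hA.mul_val_inv
  have hCq : ((B * U).map cast).submatrix r id = 1 := by
    rw [submatrix_map, hC, Matrix.map_one _ (map_zero cast) (map_one cast)]
  refine ⟨B * U, r, B.range_mulVecLin_mul_of_isUnit (Units.isUnit _), hC, fun t ht j₀ hj₀ => ?_⟩
  have hrow_eq : ∀ i, (B * U).map cast i = (U.map cast).vecMulLinear (B.map cast i) := fun i => by
    rw [Matrix.map_mul]; rfl
  have hrow : ((B * U).map cast) t ∈
      Submodule.span ℚ ((fun j => ((B * U).map cast) (r j)) '' {j | r j ∈ T}) := by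
    have := Submodule.mem_map_of_mem (f := (U.map cast).vecMulLinear) (hspan t ht)
    rw [Submodule.map_span, Set.image_image] at this
    simpa only [hrow_eq] using this
  exact (IsFractionRing.injective ℤ ℚ).eq_iff.1
    ((apply_eq_zero_of_mem_span_rows hCq hrow hj₀).trans (map_zero cast).symm)

theorem Matrix.nsmulSaturated_map_funLeft_range_of_submatrix_eq_one [Fintype κ] [DecidableEq κ]
    (C : Matrix ι κ ℤ) (r : κ → ι) (hC : C.submatrix r id = 1) (T : Finset ι)
    (hT : ∀ t ∈ T, ∀ j, r j ∉ T → C t j = 0) :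
    (Submodule.map (LinearMap.funLeft ℤ ℤ (fun i : ↥T => (i : ι)))
      (LinearMap.range C.mulVecLin)).NSMulSaturated := by
  classical
  rintro k y ⟨_, ⟨v, rfl⟩, hv⟩
  rcases eq_or_ne k 0 with rfl | hk
  · exact .inl rfl
  have hvT : ∀ t : T, (C *ᵥ v) t = k * y t := fun t => by simpa using congrFun hv t
  let w : κ → ℤ := fun j => if h : r j ∈ T then y ⟨r j, h⟩ else 0
  refine .inr ⟨C *ᵥ w, ⟨w, rfl⟩, funext fun t => ?_⟩
  have hkw : ∀ j, C t j * (k * w j) = C t j * v j := by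
    intro j
    by_cases h : r j ∈ T
    · simp [w, h, ← hvT ⟨r j, h⟩, mulVec_apply_of_submatrix_eq_one hC]
    · simp [hT t t.2 j h]
  refine mul_left_cancel₀ (Int.natCast_ne_zero.2 hk) ?_
  calc (k : ℤ) * (C *ᵥ w) t = ∑ j, C t j * (k * w j) := by
        simp only [mulVec, dotProduct, Finset.mul_sum]; ring_nf
    _ = (C *ᵥ v) t := by simp only [hkw, mulVec, dotProduct]
    _ = k * y t := hvT t

theorem Matrix.isUnit_det_of_nsmulSaturated [Fintype κ] [DecidableEq κ] (A : Matrix κ κ ℤ)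
    (hA : A.det ≠ 0) (hsat : (LinearMap.range A.mulVecLin).NSMulSaturated) : IsUnit A.det := by
  rw [← isUnit_iff_isUnit_det, ← mulVec_surjective_iff_isUnit]
  intro y
  have hdet : A.det • y ∈ LinearMap.range A.mulVecLin :=
    ⟨A.adjugate *ᵥ y, by simp [mulVec_mulVec, mul_adjugate]⟩
  exact (AddSubgroup.saturated_iff_zsmul (H := (LinearMap.range A.mulVecLin).toAddSubgroup).1
    hsat A.det y hdet).resolve_left hA

theorem Matrix.det_submatrix_mem_of_nsmulSaturated [Fintype κ] [DecidableEq κ]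
    (B : Matrix ι κ ℤ)
    (hsat : ∀ T : Finset ι, (Submodule.map (LinearMap.funLeft ℤ ℤ (fun i : ↥T => (i : ι)))
      (LinearMap.range B.mulVecLin)).NSMulSaturated)
    (r : κ ↪ ι) : (B.submatrix r id).det ∈ ({0, 1, -1} : Set ℤ) := by
  rcases eq_or_ne (B.submatrix r id).det 0 with h | h
  · exact .inl h
  let e : κ ≃ ↥(Finset.univ.map r) := Equiv.ofBijective (fun j => ⟨r j, by simp⟩)
    ⟨fun a b hab => r.injective (congrArg Subtype.val hab),
      fun ⟨_, ht⟩ => by obtain ⟨j, -, rfl⟩ := Finset.mem_map.1 ht; exact ⟨j, rfl⟩⟩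
  have hrange : LinearMap.range (B.submatrix r id).mulVecLin =
      (Submodule.map (LinearMap.funLeft ℤ ℤ (fun i : ↥(Finset.univ.map r) => (i : ι)))
        (LinearMap.range B.mulVecLin)).comap (LinearEquiv.funCongrLeft ℤ ℤ e).symm.toLinearMap := by
    rw [← Submodule.map_equiv_eq_comap_symm, ← Submodule.map_comp, ← LinearMap.range_comp]
    rfl
  exact .inr <| Int.isUnit_iff.1 <| (B.submatrix r id).isUnit_det_of_nsmulSaturated h
    (hrange ▸ Submodule.nsmulSaturated_comap (hsat _) _)

theorem Submodule.exists_linearIndependent_transpose_range_eq {R : Type*} [CommRing R]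
    [IsDomain R] [IsPrincipalIdealRing R] [Finite ι] (L : Submodule R (ι → R)) :
    ∃ (m : ℕ) (B : Matrix ι (Fin m) R),
      LinearIndependent R Bᵀ ∧ LinearMap.range B.mulVecLin = L := by
  obtain ⟨m, b⟩ := L.basisOfPid (Pi.basisFun R ι)
  refine ⟨m, Matrix.of fun i j => (b j : ι → R) i,
    b.linearIndependent.map' L.subtype L.ker_subtype, ?_⟩
  rw [range_mulVecLin]
  change span R (Set.range (L.subtype ∘ b)) = L
  rw [Set.range_comp, ← Submodule.map_span, b.span_eq, Submodule.map_top, Submodule.range_subtype]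

/-- `L ⊆ ℤ^n` is unimodular iff for every subset `T` of the coordinates, the
quotient group `ℤ^T / π_T(L)` by the coordinate projection of `L` is torsion free. -/
theorem isUnimodular_iff_projections_torsionFree {n : ℕ} (L : Submodule ℤ (Fin n → ℤ)) :
    IsUnimodular L ↔
    ∀ T : Finset (Fin n),
      ∀ (x : (↥T → ℤ) ⧸ Submodule.map (LinearMap.funLeft ℤ ℤ (fun i : ↥T => (i : Fin n))) L)
        (m : ℕ), m ≠ 0 → m • x = 0 → x = 0 := by
  refine ⟨?_, fun h => ?_⟩
  · rintro ⟨m, B, hB, hminor, rfl⟩ T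
    rw [← Submodule.nsmulSaturated_iff_quotient]
    obtain ⟨C, r, hCB, hC, hCT⟩ := B.exists_range_eq_and_submatrix_eq_one hB hminor T
    rw [← hCB]
    exact C.nsmulSaturated_map_funLeft_range_of_submatrix_eq_one r hC T hCT
  · obtain ⟨m, B, hB, rfl⟩ := L.exists_linearIndependent_transpose_range_eq
    exact ⟨m, B, hB, B.det_submatrix_mem_of_nsmulSaturated
      (fun T => (Submodule.nsmulSaturated_iff_quotient _).2 (h T)), rfl⟩
end

section
/- Let L be a unimodular subgroup of ℤ^n and let T ⊆ {1,…,n}. Then the image π_T(L) of L under the coordinate projection π_T : ℤ^n → ℤ^T is a unimodular subgroup of ℤ^T. -/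
/-!
Unimodular lattices are exactly the column spans of totally unimodular integer matrices, and
deleting rows preserves total unimodularity.

If `L` is spanned by the independent columns of `B`, some maximal minor `A = B[r, ·]` is nonzero,
hence `±1`, and `B A⁻¹` spans `L`, has the identity as its `r`-rows and still has all maximal
minors in `{0, ±1}`. Such a matrix is totally unimodular: a square minor avoiding the rows `r`
extends, by the identity rows of the missing columns, to a block triangular maximal minor with the
same determinant.

Conversely, for a totally unimodular `M` take a maximal independent set of columns `C`. Every other
column has a nonzero multiple in their span, and the multiplier can be cancelled because `C` has
a maximal minor equal to `±1`; so `C` spans the same lattice as `M`.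
-/

open Matrix

theorem SignType.range_cast {R : Type*} [Zero R] [One R] [Neg R] :
    Set.range (SignType.cast : SignType → R) = {0, 1, -1} := by
  rw [SignType.range_eq, Set.pair_comm]
  rfl

theorem Int.mul_mem_range_signType_cast {x u : ℤ} (hx : x ∈ Set.range SignType.cast)
    (hu : IsUnit u) : x * u ∈ Set.range SignType.cast := by
  obtain ⟨s, rfl⟩ := hx
  rcases Int.isUnit_iff.mp hu with rfl | rfl
  exacts [⟨s, by simp⟩, ⟨-s, by simp⟩]

namespace Function.Embedding

variable {α β : Type*}

open Classical in
noncomputable def sumComplRange (g : α ↪ β) : α ⊕ {b // b ∉ Set.range g} ≃ β :=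
  ((Equiv.ofInjective g g.injective).sumCongr (Equiv.refl _)).trans
    (Equiv.sumCompl (· ∈ Set.range g))

@[simp]
theorem sumComplRange_inl (g : α ↪ β) (a : α) : g.sumComplRange (.inl a) = g a := by
  simp [sumComplRange, Equiv.sumCompl]

@[simp]
theorem sumComplRange_inr (g : α ↪ β) (b : {b // b ∉ Set.range g}) :
    g.sumComplRange (.inr b) = b := by
  simp [sumComplRange, Equiv.sumCompl]

end Function.Embedding

namespace Matrix

variable {ι κ R : Type*} [Fintype κ]

theorem map_funLeft_range_mulVecLin [CommSemiring R] {ι' : Type*} (B : Matrix ι κ R)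
    (c : ι' → ι) :
    (LinearMap.range B.mulVecLin).map (LinearMap.funLeft R R c) =
      LinearMap.range (B.submatrix c id).mulVecLin := by
  rw [← LinearMap.range_comp]
  rfl

variable [DecidableEq κ]

theorem range_mulVecLin_mul_of_isUnit_s4 [CommRing R] (B : Matrix ι κ R) {N : Matrix κ κ R}
    (hN : IsUnit N) : LinearMap.range (B * N).mulVecLin = LinearMap.range B.mulVecLin := by
  rw [mulVecLin_mul, LinearMap.range_comp_of_range_eq_top]
  exact LinearMap.range_eq_top.mpr (mulVec_surjective_iff_isUnit.mpr hN)

theorem mem_range_mulVecLin_of_smul_mem [CommRing R] [IsDomain R] {C : Matrix ι κ R}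
    {r : κ → ι} (hr : IsUnit (C.submatrix r id).det) {a : R} (ha : a ≠ 0) {w : ι → R}
    (hw : a • w ∈ LinearMap.range C.mulVecLin) : w ∈ LinearMap.range C.mulVecLin := by
  obtain ⟨x, hx⟩ := hw
  set A := C.submatrix r id
  have hAx : A *ᵥ x = a • (w ∘ r) := funext fun i => congrFun hx (r i)
  refine ⟨A⁻¹ *ᵥ (w ∘ r), smul_right_injective _ ha ?_⟩
  calc a • C *ᵥ (A⁻¹ *ᵥ (w ∘ r)) = C *ᵥ (A⁻¹ *ᵥ (A *ᵥ x)) := by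
        rw [hAx, mulVec_smul, mulVec_smul]
    _ = C *ᵥ x := by rw [mulVec_mulVec (M := A⁻¹), nonsing_inv_mul _ hr, one_mulVec]
    _ = a • w := hx

theorem isTotallyUnimodular_of_det_submatrix_one_fromRows [CommRing R] {κ' : Type*}
    (D : Matrix κ' κ R)
    (hD : ∀ s : κ ↪ κ ⊕ κ', ((fromRows 1 D).submatrix s id).det ∈ Set.range SignType.cast) :
    D.IsTotallyUnimodular := by
  intro j f g hf hg
  -- complete `D[f, g]` by the identity rows of the columns outside `g`
  let g' : Fin j ↪ κ := ⟨g, hg⟩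
  let σ := g'.sumComplRange
  let ρ : Fin j ⊕ {p // p ∉ Set.range g'} → κ ⊕ κ' := Sum.elim (.inr ∘ f) (.inl ∘ Subtype.val)
  have hρ : ρ.Injective :=
    (Sum.inr_injective.comp hf).sumElim (Sum.inl_injective.comp Subtype.val_injective) (by simp)
  have hblocks : (fromRows 1 D).submatrix ρ σ =
      fromBlocks (D.submatrix f g) (D.submatrix f Subtype.val) 0 1 := by
    ext (a | a) (b | b)
    · simp [ρ, σ, g']
    · simp [ρ, σ]
    · have hab : (a : κ) ≠ g b := fun h => a.2 ⟨b, h.symm⟩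
      simp [ρ, σ, g', one_apply_ne hab]
    · simp [ρ, σ, one_apply, Subtype.ext_iff]
  have hdet := hD ⟨ρ ∘ σ.symm, hρ.comp σ.symm.injective⟩
  rwa [Function.Embedding.coeFn_mk, ← det_submatrix_equiv_self σ, submatrix_submatrix,
    Function.comp_assoc, σ.symm_comp_self, Function.comp_id, Function.id_comp, hblocks,
    det_fromBlocks_zero₂₁, det_one, mul_one] at hdet

theorem isTotallyUnimodular_of_submatrix_eq_one [CommRing R] {B : Matrix ι κ R} (r : κ ↪ ι)
    (hr : B.submatrix r id = 1)
    (hB : ∀ s : κ ↪ ι, (B.submatrix s id).det ∈ Set.range SignType.cast) :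
    B.IsTotallyUnimodular := by
  let e := r.sumComplRange
  let D := B.submatrix (Subtype.val : {i // i ∉ Set.range r} → ι) id
  have hfromRows : B.submatrix e id = fromRows 1 D := by
    ext (p | x) q
    · simp [e, ← hr]
    · simp [e, D]
  have hD : D.IsTotallyUnimodular := by
    refine isTotallyUnimodular_of_det_submatrix_one_fromRows _ fun s => ?_
    rw [← hfromRows, submatrix_submatrix]
    exact hB ⟨e ∘ s, e.injective.comp s.injective⟩
  rw [← reindex_isTotallyUnimodular B e.symm (Equiv.refl κ)]
  simpa [hfromRows] using hD.one_fromRows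

variable [Fintype ι]

theorem exists_isUnit_submatrix_of_linearIndependent_cols {K : Type*} [Field K]
    {A : Matrix ι κ K} (h : LinearIndependent K Aᵀ) :
    ∃ r : κ ↪ ι, IsUnit (A.submatrix r id) := by
  have hspan : Submodule.span K (Set.range A.row) = ⊤ := by
    apply Submodule.eq_top_of_finrank_eq
    rw [← rank_eq_finrank_span_row, ← rank_transpose, LinearIndependent.rank_matrix (M := Aᵀ) h,
      Module.finrank_fintype_fun_eq_card]
  obtain ⟨κ', a, ha, hsp, hli⟩ := exists_linearIndependent' K A.row
  let b : Module.Basis κ' K (κ → K) := .mk hli (by rw [hsp, hspan])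
  let e := b.indexEquiv (Pi.basisFun K κ)
  refine ⟨⟨a ∘ e.symm, ha.comp e.symm.injective⟩, linearIndependent_rows_iff_isUnit.mp ?_⟩
  exact hli.comp _ e.symm.injective

theorem exists_det_submatrix_ne_zero_of_linearIndependent_cols [CommRing R] [IsDomain R]
    {A : Matrix ι κ R} (h : LinearIndependent R Aᵀ) :
    ∃ r : κ ↪ ι, (A.submatrix r id).det ≠ 0 := by
  let f := algebraMap R (FractionRing R)
  have hf : LinearIndependent (FractionRing R) (A.map f)ᵀ :=
    (linearIndependent_algebraMap_comp_iff (S := FractionRing R) (v := Aᵀ)).mpr h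
  obtain ⟨r, hr⟩ := exists_isUnit_submatrix_of_linearIndependent_cols hf
  refine ⟨r, fun h0 => ?_⟩
  rw [isUnit_iff_isUnit_det, submatrix_map, ← RingHom.mapMatrix_apply, ← RingHom.map_det, h0,
    map_zero] at hr
  exact not_isUnit_zero hr

theorem exists_isUnit_det_submatrix_of_linearIndependent_cols {B : Matrix ι κ ℤ}
    (hli : LinearIndependent ℤ Bᵀ)
    (hB : ∀ s : κ ↪ ι, (B.submatrix s id).det ∈ Set.range SignType.cast) :
    ∃ r : κ ↪ ι, IsUnit (B.submatrix r id).det := by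
  obtain ⟨r, hr⟩ := exists_det_submatrix_ne_zero_of_linearIndependent_cols hli
  obtain ⟨s, hs⟩ := hB r
  refine ⟨r, ?_⟩
  rw [← hs] at hr ⊢
  cases s <;> simp at hr ⊢

end Matrix

theorem Matrix.IsTotallyUnimodular.isUnimodular_range_mulVecLin {ι : Type*} [Fintype ι] {m : ℕ}
    {M : Matrix ι (Fin m) ℤ} (hM : M.IsTotallyUnimodular) :
    IsUnimodular (LinearMap.range M.mulVecLin) := by
  classical
  obtain ⟨s, hs, hmax⟩ := exists_maximal_linearIndepOn ℤ Mᵀ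
  obtain ⟨k, g, rfl⟩ : ∃ (k : ℕ) (g : Fin k ↪ Fin m), Set.range g = s :=
    ⟨_, (s.toFinset.orderEmbOfFin rfl).toEmbedding, by simp⟩
  let C := M.submatrix id g
  have hC : LinearIndependent ℤ Cᵀ := (linearIndepOn_range_iff g.injective _).mp hs
  have hCmin : ∀ r : Fin k ↪ ι, (C.submatrix r id).det ∈ Set.range SignType.cast :=
    fun r => hM _ r g r.injective g.injective
  obtain ⟨r, hr⟩ := exists_isUnit_det_submatrix_of_linearIndependent_cols hC hCmin
  have hspan : LinearMap.range C.mulVecLin = Submodule.span ℤ (Mᵀ '' Set.range g) := by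
    rw [range_mulVecLin]
    exact congrArg _ (Set.range_comp Mᵀ g)
  refine ⟨k, C, hC, by simpa only [SignType.range_cast] using hCmin, le_antisymm ?_ ?_⟩
  · rw [range_mulVecLin M, Submodule.span_le]
    rintro _ ⟨j, rfl⟩
    by_cases hj : j ∈ Set.range g
    · rw [hspan]
      exact Submodule.subset_span (Set.mem_image_of_mem _ hj)
    · obtain ⟨a, ha, hmem⟩ := hmax j hj
      rw [← hspan] at hmem
      exact mem_range_mulVecLin_of_smul_mem hr ha hmem
  · rw [hspan, range_mulVecLin]
    exact Submodule.span_mono (Set.image_subset_range _ _)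

theorem isUnimodular_iff_exists_isTotallyUnimodular {ι : Type*} [Fintype ι]
    {L : Submodule ℤ (ι → ℤ)} :
    IsUnimodular L ↔ ∃ (m : ℕ) (M : Matrix ι (Fin m) ℤ),
      M.IsTotallyUnimodular ∧ L = LinearMap.range M.mulVecLin := by
  refine ⟨?_, fun ⟨m, M, hM, hL⟩ => hL ▸ hM.isUnimodular_range_mulVecLin⟩
  rintro ⟨m, B, hli, hmin, rfl⟩
  rw [← SignType.range_cast] at hmin
  obtain ⟨r, hr⟩ := exists_isUnit_det_submatrix_of_linearIndependent_cols hli hmin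
  set A := B.submatrix r id
  have hA : IsUnit A := (isUnit_iff_isUnit_det A).mpr hr
  refine ⟨m, B * A⁻¹, ?_, (range_mulVecLin_mul_of_isUnit_s4 B (isUnit_nonsing_inv_iff.mpr hA)).symm⟩
  refine isTotallyUnimodular_of_submatrix_eq_one r ?_ fun s => ?_
  · rw [submatrix_mul _ _ _ id _ Function.bijective_id, submatrix_id_id, mul_nonsing_inv _ hr]
  · rw [submatrix_mul _ _ _ id _ Function.bijective_id, submatrix_id_id, det_mul]
    exact Int.mul_mem_range_signType_cast (hmin s) (isUnit_nonsing_inv_det A hr)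

/-- coordinate projections of a unimodular lattice are unimodular. -/
theorem isUnimodular_map_proj {n : ℕ} (L : Submodule ℤ (Fin n → ℤ)) (hL : IsUnimodular L)
    (T : Finset (Fin n)) :
    IsUnimodular (Submodule.map (LinearMap.funLeft ℤ ℤ (fun i : ↥T => (i : Fin n))) L) := by
  obtain ⟨m, M, hM, rfl⟩ := isUnimodular_iff_exists_isTotallyUnimodular.mp hL
  rw [map_funLeft_range_mulVecLin]
  exact (hM.submatrix _ id).isUnimodular_range_mulVecLin
end

section
/- Let L be a subgroup of ℤ^n and let ℝL denote the real span of L inside ℝ^n. Then: (1) every lattice point v ∈ L is a vertex of the arrangement H_L, i.e., there exists a finite set P of pairs (i, j) with i ∈ {1,…,n} and j ∈ ℤ such that v is the unique point x of ℝL satisfying x_i = j for all (i, j) ∈ P; and (2) every vertex of H_L lies in L if and only if L is unimodular. -/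
/-- The canonical map `ℤ^n → ℝ^n`. -/
def intCastVec {n : ℕ} (v : Fin n → ℤ) : Fin n → ℝ := fun i => (v i : ℝ)

/-- `ℝL`, the real span of a lattice `L ⊆ ℤ^n` inside `ℝ^n`. -/
def realSpan {n : ℕ} (L : Submodule ℤ (Fin n → ℤ)) : Submodule ℝ (Fin n → ℝ) :=
  Submodule.span ℝ (intCastVec '' (L : Set (Fin n → ℤ)))

/-- `x` is a vertex of the infinite hyperplane arrangement `H_L` in `ℝL`: there is a finite set
`P` of pairs `(i, j)` such that `x` is the unique point of `ℝL` satisfying `x_i = j` for all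
`(i, j) ∈ P`. -/
def IsVertex {n : ℕ} (L : Submodule ℤ (Fin n → ℤ)) (x : Fin n → ℝ) : Prop :=
  x ∈ realSpan L ∧ ∃ P : Finset (Fin n × ℤ),
    {y : Fin n → ℝ | y ∈ realSpan L ∧ ∀ p ∈ P, y p.1 = (p.2 : ℝ)} = {x}

/-! Write `L = B ℤ^m` with `B` of full column rank, so that `ℝL = B ℝ^m`. A point of `ℝL` fixed
by integer values on a set of coordinates is unique only if those rows of `B` have full rank, so
it is pinned down by integer values `w` on `m` rows `r` with `det B_r ≠ 0`: it is `B (B_r⁻¹ w)`.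
If all maximal minors are `0, ±1`, then `B_r⁻¹` is integral and this point lies in `L`.
Conversely, if all vertices lie in `L`, then for every nonsingular `B_r` each `w ∈ ℤ^m` lies in
`B_r ℤ^m`; so `B_r` is invertible over `ℤ` and `det B_r = ±1`. -/

open Matrix Function

theorem Matrix.exists_submatrix_det_ne_zero_of_mulVec_injective {K ι : Type*} [Field K]
    [Finite ι] {m : ℕ} {M : Matrix ι (Fin m) K} (hM : Injective M.mulVec) :
    ∃ r : Fin m ↪ ι, (M.submatrix r id).det ≠ 0 := by
  obtain ⟨κ, a, ha, hspan, hli⟩ := exists_linearIndependent' K M.row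
  have : Finite κ := Finite.of_injective a ha
  have : Fintype κ := Fintype.ofFinite κ
  have hcard : Fintype.card κ = m := by
    rw [← finrank_span_eq_card hli, hspan, ← rank_eq_finrank_span_row, rank,
      LinearMap.finrank_range_of_inj hM, Module.finrank_fin_fun]
  let e : Fin m ≃ κ := (Fintype.equivFinOfCardEq hcard).symm
  refine ⟨⟨a ∘ e, ha.comp e.injective⟩, ?_⟩
  have hrows : LinearIndependent K (M.submatrix (a ∘ e) id).row := by
    have : (M.submatrix (a ∘ e) id).row = (M.row ∘ a) ∘ e := rfl
    exact this ▸ hli.comp e e.injective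
  exact ((isUnit_iff_isUnit_det _).mp (linearIndependent_rows_iff_isUnit.mp hrows)).ne_zero

theorem Matrix.mulVec_map_intCast_injective {ι κ : Type*} [Finite ι] [Fintype κ]
    {B : Matrix ι κ ℤ} (hB : LinearIndependent ℤ Bᵀ) :
    Injective (B.map (Int.cast : ℤ → ℝ)).mulVec := by
  have hcol : (B.map (Int.cast : ℤ → ℝ)).col = fun k => algebraMap ℤ ℝ ∘ Bᵀ k := by
    ext k i
    simp [col]
  rw [mulVec_injective_iff, hcol]
  exact linearIndependent_algebraMap_comp_iff.mpr hB

theorem Matrix.mulVec_map_intCast_injective_of_det_ne_zero {ι : Type*} [Fintype ι]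
    [DecidableEq ι] {A : Matrix ι ι ℤ} (hA : A.det ≠ 0) :
    Injective (A.map (Int.cast : ℤ → ℝ)).mulVec := by
  rw [mulVec_injective_iff_isUnit, isUnit_iff_isUnit_det, isUnit_iff_ne_zero, ← Int.cast_det]
  exact_mod_cast hA

theorem Int.mem_zero_one_neg_one_iff (d : ℤ) :
    d ∈ ({0, 1, -1} : Set ℤ) ↔ d = 0 ∨ IsUnit d := by
  simp [Int.isUnit_iff]

section

variable {n m : ℕ}

theorem intCastVec_injective : Injective (intCastVec (n := n)) :=
  fun _ _ h => funext fun i => Int.cast_injective (congrFun h i)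

theorem intCastVec_mulVec (B : Matrix (Fin n) (Fin m) ℤ) (u : Fin m → ℤ) :
    intCastVec (B *ᵥ u) = B.map (Int.cast : ℤ → ℝ) *ᵥ intCastVec u := by
  funext i
  exact RingHom.map_mulVec (Int.castRingHom ℝ) B u i

theorem realSpan_range_mulVecLin (B : Matrix (Fin n) (Fin m) ℤ) :
    realSpan (LinearMap.range B.mulVecLin) =
      LinearMap.range (B.map (Int.cast : ℤ → ℝ)).mulVecLin := by
  let f : (Fin n → ℤ) →ₗ[ℤ] (Fin n → ℝ) := (Algebra.linearMap ℤ ℝ).compLeft (Fin n)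
  have hf : ⇑f = intCastVec := rfl
  rw [realSpan, range_mulVecLin, range_mulVecLin, ← hf, ← Submodule.map_coe, Submodule.map_span,
    Submodule.span_span_of_tower, ← Set.range_comp]
  rfl

theorem exists_linearIndependent_range_mulVecLin_eq (L : Submodule ℤ (Fin n → ℤ)) :
    ∃ (m : ℕ) (B : Matrix (Fin n) (Fin m) ℤ),
      LinearIndependent ℤ Bᵀ ∧ L = LinearMap.range B.mulVecLin := by
  obtain ⟨m, b⟩ := Submodule.basisOfPid (Pi.basisFun ℤ (Fin n)) L
  refine ⟨m, (of fun k => (b k : Fin n → ℤ))ᵀ, ?_, ?_⟩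
  · exact b.linearIndependent.map' L.subtype L.ker_subtype
  · rw [range_mulVecLin, col, transpose_transpose]
    change L = Submodule.span ℤ (Set.range (L.subtype ∘ b))
    rw [Set.range_comp, ← Submodule.map_span, b.span_eq, Submodule.map_top, Submodule.range_subtype]

theorem isVertex_intCastVec {L : Submodule ℤ (Fin n → ℤ)} {v : Fin n → ℤ} (hv : v ∈ L) :
    IsVertex L (intCastVec v) := by
  have hmem : intCastVec v ∈ realSpan L := Submodule.subset_span ⟨v, hv, rfl⟩
  refine ⟨hmem, Finset.univ.image fun i => (i, v i), Set.eq_singleton_iff_unique_mem.mpr ⟨?_, ?_⟩⟩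
  · refine ⟨hmem, fun p hp => ?_⟩
    obtain ⟨i, -, rfl⟩ := Finset.mem_image.mp hp
    rfl
  · rintro y ⟨-, hy⟩
    funext i
    exact hy (i, v i) (Finset.mem_image_of_mem _ (Finset.mem_univ i))

theorem isVertex_mulVec_of_submatrix_det_ne_zero {B : Matrix (Fin n) (Fin m) ℤ}
    {r : Fin m → Fin n} (hr : (B.submatrix r id).det ≠ 0) {c : Fin m → ℝ} {w : Fin m → ℤ}
    (hc : (B.map (Int.cast : ℤ → ℝ) *ᵥ c) ∘ r = intCastVec w) :
    IsVertex (LinearMap.range B.mulVecLin) (B.map (Int.cast : ℤ → ℝ) *ᵥ c) := by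
  rw [IsVertex, realSpan_range_mulVecLin]
  refine ⟨⟨c, rfl⟩, Finset.univ.image fun k => (r k, w k),
    Set.eq_singleton_iff_unique_mem.mpr ⟨⟨⟨c, rfl⟩, fun p hp => ?_⟩, ?_⟩⟩
  · obtain ⟨k, -, rfl⟩ := Finset.mem_image.mp hp
    exact congrFun hc k
  · rintro _ ⟨⟨c', rfl⟩, hc'⟩
    have hrows : (B.map (Int.cast : ℤ → ℝ) *ᵥ c') ∘ r = intCastVec w :=
      funext fun k => hc' (r k, w k) (Finset.mem_image_of_mem _ (Finset.mem_univ k))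
    rw [mulVec_map_intCast_injective_of_det_ne_zero hr (hrows.trans hc.symm :)]
    rfl

theorem exists_submatrix_det_ne_zero_of_isVertex {B : Matrix (Fin n) (Fin m) ℤ}
    (hB : LinearIndependent ℤ Bᵀ) {x : Fin n → ℝ}
    (hx : IsVertex (LinearMap.range B.mulVecLin) x) :
    ∃ (r : Fin m ↪ Fin n) (c : Fin m → ℝ) (w : Fin m → ℤ),
      (B.submatrix r id).det ≠ 0 ∧ B.map (Int.cast : ℤ → ℝ) *ᵥ c = x ∧ x ∘ r = intCastVec w := by
  obtain ⟨hx, P, hP⟩ := hx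
  rw [realSpan_range_mulVecLin] at hx hP
  obtain ⟨c, rfl⟩ := hx
  set R := B.map (Int.cast : ℤ → ℝ)
  have hcP : ∀ p ∈ P, (R *ᵥ c) p.1 = p.2 := (hP.superset (Set.mem_singleton _)).2
  have huniq : ∀ c', (∀ p ∈ P, (R *ᵥ c') p.1 = p.2) → c' = c := fun c' hc' =>
    mulVec_map_intCast_injective hB (hP.subset ⟨⟨c', rfl⟩, hc'⟩ :)
  let S := P.image Prod.fst
  have hS : Injective (R.submatrix (Subtype.val : S → Fin n) id).mulVec := by
    refine (injective_iff_map_eq_zero (R.submatrix (Subtype.val : S → Fin n) id).mulVecLin).mpr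
      fun g hg => ?_
    have hcg := huniq (c + g) fun p hp => by
      have hgp : (R *ᵥ g) p.1 = 0 := congrFun hg ⟨p.1, Finset.mem_image_of_mem _ hp⟩
      rw [mulVec_add, Pi.add_apply, hgp, add_zero, hcP p hp]
    simpa using hcg
  obtain ⟨r₀, hr₀⟩ := exists_submatrix_det_ne_zero_of_mulVec_injective hS
  have hw : ∀ k, ∃ z : ℤ, (R *ᵥ c) (r₀ k) = z := fun k => by
    obtain ⟨p, hp, hpk⟩ := Finset.mem_image.mp (r₀ k).2
    exact ⟨p.2, hpk ▸ hcP p hp⟩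
  choose w hw using hw
  refine ⟨r₀.trans (Embedding.subtype _), c, w, ?_, rfl, funext hw⟩
  rw [← Int.cast_ne_zero (α := ℝ), Int.cast_det]
  exact hr₀

theorem IsUnimodular.exists_eq_intCastVec_of_isVertex {L : Submodule ℤ (Fin n → ℤ)}
    (hL : IsUnimodular L) {x : Fin n → ℝ} (hx : IsVertex L x) : ∃ v ∈ L, intCastVec v = x := by
  obtain ⟨m, B, hB, hminors, rfl⟩ := hL
  obtain ⟨r, c, w, hr, rfl, hw⟩ := exists_submatrix_det_ne_zero_of_isVertex hB hx
  set A := B.submatrix r id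
  have hA : IsUnit A.det := ((Int.mem_zero_one_neg_one_iff _).mp (hminors r)).resolve_left hr
  refine ⟨B *ᵥ (A⁻¹ *ᵥ w), ⟨A⁻¹ *ᵥ w, rfl⟩, ?_⟩
  rw [intCastVec_mulVec]
  congr 1
  apply mulVec_map_intCast_injective_of_det_ne_zero hr
  rw [← intCastVec_mulVec, mulVec_mulVec, mul_nonsing_inv _ hA, one_mulVec]
  exact hw.symm

theorem isUnimodular_of_forall_isVertex {L : Submodule ℤ (Fin n → ℤ)}
    (H : ∀ x, IsVertex L x → ∃ v ∈ L, intCastVec v = x) : IsUnimodular L := by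
  obtain ⟨m, B, hB, rfl⟩ := exists_linearIndependent_range_mulVecLin_eq L
  refine ⟨m, B, hB, fun r => (Int.mem_zero_one_neg_one_iff _).mpr ?_, rfl⟩
  refine or_iff_not_imp_left.mpr fun hr => ?_
  set A := B.submatrix r id
  have hAℝ : IsUnit (A.map (Int.cast : ℤ → ℝ)).det := by
    rw [← Int.cast_det, isUnit_iff_ne_zero]
    exact_mod_cast hr
  rw [← isUnit_iff_isUnit_det, ← mulVec_surjective_iff_isUnit]
  intro w
  set c := (A.map (Int.cast : ℤ → ℝ))⁻¹ *ᵥ intCastVec w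
  have hc : (B.map (Int.cast : ℤ → ℝ) *ᵥ c) ∘ r = intCastVec w := by
    change A.map (Int.cast : ℤ → ℝ) *ᵥ c = _
    rw [mulVec_mulVec, mul_nonsing_inv _ hAℝ, one_mulVec]
  obtain ⟨_, ⟨u, rfl⟩, hu⟩ := H _ (isVertex_mulVec_of_submatrix_det_ne_zero hr hc)
  refine ⟨u, intCastVec_injective ?_⟩
  change intCastVec (B *ᵥ u) ∘ r = intCastVec w
  rw [← hc, ← hu]
  rfl

end

/-- every lattice point of `L` is a vertex of the arrangement `H_L`, and every
vertex of `H_L` lies in `L` if and only if `L` is unimodular. -/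
theorem lattice_points_are_vertices_and_no_new_vertices_iff_unimodular
    {n : ℕ} (L : Submodule ℤ (Fin n → ℤ)) :
    (∀ v ∈ L, IsVertex L (intCastVec v)) ∧
    ((∀ x : Fin n → ℝ, IsVertex L x → ∃ v ∈ L, intCastVec v = x) ↔ IsUnimodular L) :=
  ⟨fun _ => isVertex_intCastVec,
    isUnimodular_of_forall_isVertex, fun hL _ => hL.exists_eq_intCastVec_of_isVertex⟩
end

section
/- Let k be a field, L a subgroup of ℤ^n, and J_L ⊆ S = k[x_1,…,x_n,y_1,…,y_n] its Lawrence ideal. For a Graver element v of L let g_v = x^{v⁺} y^{v⁻} − x^{v⁻} y^{v⁺}. Then the binomials g_v, as v ranges over the Graver elements of L, generate J_L, and this generating set is minimal: for every Graver element w, the binomial g_w does not lie in the ideal generated by the binomials g_v with v ≠ w and v ≠ −w. -/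
open MvPolynomial

/-- The Lawrence ideal `J_L` of a lattice `L ⊆ ℤ^ι`, in the polynomial ring
`k[x_i, y_i : i ∈ ι]`: it is generated by the binomials `x^a y^b - x^b y^a` with `a - b ∈ L`. -/
noncomputable def lawrenceIdeal (k : Type*) [Field k] {ι : Type*} [Fintype ι]
    (L : Submodule ℤ (ι → ℤ)) : Ideal (MvPolynomial (ι ⊕ ι) k) :=
  Ideal.span { f | ∃ a b : ι → ℕ,
    (fun i => (a i : ℤ) - (b i : ℤ)) ∈ L ∧
    f = (∏ i, X (Sum.inl i) ^ a i) * (∏ i, X (Sum.inr i) ^ b i)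
      - (∏ i, X (Sum.inl i) ^ b i) * (∏ i, X (Sum.inr i) ^ a i) }

/-- The binomial `g_v = x^{v⁺} y^{v⁻} - x^{v⁻} y^{v⁺}` associated with a vector `v ∈ ℤ^n`. -/
noncomputable def graverBinomial (k : Type*) [Field k] {n : ℕ} (v : Fin n → ℤ) :
    MvPolynomial (Fin n ⊕ Fin n) k :=
  (∏ i, X (Sum.inl i) ^ (v i).toNat) * (∏ i, X (Sum.inr i) ^ (-v i).toNat)
    - (∏ i, X (Sum.inl i) ^ (-v i).toNat) * (∏ i, X (Sum.inr i) ^ (v i).toNat)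

/-! Every nonzero `v ∈ L` lies conformally above a Graver element `u` (one of least `ℓ¹`-norm),
and since `v⁺ = (v - u)⁺ + u⁺`, `v⁻ = (v - u)⁻ + u⁻`,
`g_v = x^{(v-u)⁺} y^{(v-u)⁻} g_u + x^{u⁻} y^{u⁺} g_{v-u}`, where `v - u ∈ L` has smaller norm.
By induction every `g_v` with `v ∈ L` lies in the ideal of Graver binomials, and so does every
generator `x^a y^b - x^b y^a = x^{a ⊓ b} y^{a ⊓ b} g_{a-b}` of `J_L`.

For minimality, the polynomials none of whose monomials divides `x^{w⁺} y^{w⁻}` form an ideal. It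
contains `g_v` unless `v` or `-v` is conformally below `w`, i.e. unless `v = ±w` since `w` is
Graver; but it does not contain `g_w`. -/

section Lawrence

variable (k : Type*) [Field k] {ι : Type*} [Fintype ι]

noncomputable def lawrenceExponent (a b : ι → ℕ) : ι ⊕ ι →₀ ℕ :=
  Finsupp.equivFunOnFinite.symm (Sum.elim a b)

theorem lawrenceExponent_le_iff {a b c d : ι → ℕ} :
    lawrenceExponent a b ≤ lawrenceExponent c d ↔ a ≤ c ∧ b ≤ d := by
  simp [Finsupp.le_def, lawrenceExponent, Pi.le_def, Sum.forall]

theorem lawrenceExponent_add (a b c d : ι → ℕ) :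
    lawrenceExponent a b + lawrenceExponent c d = lawrenceExponent (a + c) (b + d) := by
  ext (i | i) <;> rfl

noncomputable def lawrenceMonomial (a b : ι → ℕ) : MvPolynomial (ι ⊕ ι) k :=
  monomial (lawrenceExponent a b) 1

theorem lawrenceMonomial_eq_prod (a b : ι → ℕ) :
    lawrenceMonomial k a b = (∏ i, X (Sum.inl i) ^ a i) * (∏ i, X (Sum.inr i) ^ b i) := by
  rw [lawrenceMonomial, monomial_eq, C_1, one_mul, Finsupp.prod_fintype _ _ (fun _ => pow_zero _),
    Fintype.prod_sum_type]
  rfl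

theorem lawrenceMonomial_mul (a b c d : ι → ℕ) :
    lawrenceMonomial k a b * lawrenceMonomial k c d = lawrenceMonomial k (a + c) (b + d) := by
  rw [lawrenceMonomial, lawrenceMonomial, monomial_mul, one_mul, lawrenceExponent_add,
    lawrenceMonomial]

noncomputable def lawrenceBinomial (a b : ι → ℕ) : MvPolynomial (ι ⊕ ι) k :=
  lawrenceMonomial k a b - lawrenceMonomial k b a

@[simp]
theorem lawrenceBinomial_self (a : ι → ℕ) : lawrenceBinomial k a a = 0 :=
  sub_self _

theorem lawrenceBinomial_add (a b c d : ι → ℕ) :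
    lawrenceBinomial k (c + a) (d + b) =
      lawrenceMonomial k c d * lawrenceBinomial k a b +
        lawrenceMonomial k b a * lawrenceBinomial k c d := by
  simp only [lawrenceBinomial, mul_sub, lawrenceMonomial_mul]
  rw [add_comm b c, add_comm a d, add_comm b d, add_comm a c]
  abel

end Lawrence

section Conformal

variable {ι : Type*}

def ConformalLE (w v : ι → ℤ) : Prop :=
  Int.toNat ∘ w ≤ Int.toNat ∘ v ∧ Int.toNat ∘ (-w) ≤ Int.toNat ∘ (-v)

theorem ConformalLE.refl (v : ι → ℤ) : ConformalLE v v :=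
  ⟨le_rfl, le_rfl⟩

theorem ConformalLE.trans {u v w : ι → ℤ} (huv : ConformalLE u v) (hvw : ConformalLE v w) :
    ConformalLE u w :=
  ⟨huv.1.trans hvw.1, huv.2.trans hvw.2⟩

theorem ConformalLE.toNat_sub_add {w v : ι → ℤ} (h : ConformalLE w v) :
    Int.toNat ∘ (v - w) + Int.toNat ∘ w = Int.toNat ∘ v :=
  funext fun i => by
    have := h.1 i; have := h.2 i
    simp only [Function.comp_apply, Pi.add_apply, Pi.sub_apply, Pi.neg_apply] at *
    omega

theorem ConformalLE.toNat_neg_sub_add {w v : ι → ℤ} (h : ConformalLE w v) :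
    Int.toNat ∘ (-(v - w)) + Int.toNat ∘ (-w) = Int.toNat ∘ (-v) :=
  funext fun i => by
    have := h.1 i; have := h.2 i
    simp only [Function.comp_apply, Pi.add_apply, Pi.sub_apply, Pi.neg_apply] at *
    omega

variable [Fintype ι]

def l1Norm (v : ι → ℤ) : ℕ :=
  ∑ i, (v i).natAbs

theorem l1Norm_pos {v : ι → ℤ} (hv : v ≠ 0) : 0 < l1Norm v := by
  obtain ⟨i, hi⟩ := Function.ne_iff.mp hv
  exact Finset.sum_pos' (fun _ _ => Nat.zero_le _) ⟨i, Finset.mem_univ i, Int.natAbs_pos.mpr hi⟩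

theorem ConformalLE.l1Norm_sub_add {w v : ι → ℤ} (h : ConformalLE w v) :
    l1Norm (v - w) + l1Norm w = l1Norm v := by
  rw [l1Norm, l1Norm, l1Norm, ← Finset.sum_add_distrib]
  refine Finset.sum_congr rfl fun i _ => ?_
  have := h.1 i; have := h.2 i
  simp only [Function.comp_apply, Pi.sub_apply, Pi.neg_apply] at *
  omega

end Conformal

section Graver

variable {n : ℕ} {L : Submodule ℤ (Fin n → ℤ)}

theorem IsGraver.eq_of_conformalLE {v w : Fin n → ℤ} (hv : IsGraver L v) (hw : w ∈ L)
    (hw0 : w ≠ 0) (h : ConformalLE w v) : w = v :=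
  hv.2.2 w hw hw0 h.1 h.2

theorem exists_isGraver_conformalLE {v : Fin n → ℤ} (hv : v ∈ L) (hv0 : v ≠ 0) :
    ∃ u, IsGraver L u ∧ ConformalLE u v := by
  obtain ⟨u, ⟨huL, hu0, huv⟩, hmin⟩ := (measure (l1Norm (ι := Fin n))).wf.has_min
    {w | w ∈ L ∧ w ≠ 0 ∧ ConformalLE w v} ⟨v, hv, hv0, ConformalLE.refl v⟩
  refine ⟨u, ⟨huL, hu0, fun w hwL hw0 h₁ h₂ => ?_⟩, huv⟩
  have hwu : ConformalLE w u := ⟨h₁, h₂⟩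
  by_contra hne
  have hsub := hwu.l1Norm_sub_add
  have hpos := l1Norm_pos (sub_ne_zero.mpr (Ne.symm hne))
  exact hmin w ⟨hwL, hw0, hwu.trans huv⟩ (by change l1Norm w < l1Norm u; omega)

end Graver

section GraverBinomial

variable (k : Type*) [Field k] {n : ℕ}

theorem graverBinomial_eq_lawrenceBinomial (v : Fin n → ℤ) :
    graverBinomial k v = lawrenceBinomial k (Int.toNat ∘ v) (Int.toNat ∘ (-v)) := by
  rw [lawrenceBinomial, lawrenceMonomial_eq_prod, lawrenceMonomial_eq_prod]
  rfl

theorem ConformalLE.graverBinomial_eq {w v : Fin n → ℤ} (h : ConformalLE w v) :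
    graverBinomial k v =
      lawrenceMonomial k (Int.toNat ∘ (v - w)) (Int.toNat ∘ (-(v - w))) * graverBinomial k w +
        lawrenceMonomial k (Int.toNat ∘ (-w)) (Int.toNat ∘ w) * graverBinomial k (v - w) := by
  simp only [graverBinomial_eq_lawrenceBinomial]
  rw [← h.toNat_sub_add, ← h.toNat_neg_sub_add]
  exact lawrenceBinomial_add k _ _ _ _

theorem lawrenceBinomial_eq_mul_graverBinomial (a b : Fin n → ℕ) :
    lawrenceBinomial k a b =
      lawrenceMonomial k (a ⊓ b) (a ⊓ b) * graverBinomial k (fun i => (a i : ℤ) - b i) := by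
  have ha : a ⊓ b + Int.toNat ∘ (fun i => (a i : ℤ) - b i) = a :=
    funext fun i => by simp only [Pi.add_apply, Pi.inf_apply, Function.comp_apply]; omega
  have hb : a ⊓ b + Int.toNat ∘ (-fun i => (a i : ℤ) - b i) = b :=
    funext fun i => by
      simp only [Pi.add_apply, Pi.inf_apply, Function.comp_apply, Pi.neg_apply]
      omega
  calc lawrenceBinomial k a b
      = lawrenceBinomial k (a ⊓ b + Int.toNat ∘ (fun i => (a i : ℤ) - b i))
          (a ⊓ b + Int.toNat ∘ (-fun i => (a i : ℤ) - b i)) := by rw [ha, hb]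
    _ = _ := by
      rw [lawrenceBinomial_add, lawrenceBinomial_self, mul_zero, add_zero,
        graverBinomial_eq_lawrenceBinomial]

variable {k} {L : Submodule ℤ (Fin n → ℤ)}

theorem graverBinomial_mem_lawrenceIdeal {v : Fin n → ℤ} (hv : v ∈ L) :
    graverBinomial k v ∈ lawrenceIdeal k L :=
  Ideal.subset_span ⟨Int.toNat ∘ v, Int.toNat ∘ (-v), by
    simpa only [Function.comp_apply, Pi.neg_apply, Int.toNat_sub_toNat_neg] using hv, rfl⟩

theorem graverBinomial_mem_span_graver {v : Fin n → ℤ} (hv : v ∈ L) :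
    graverBinomial k v ∈ Ideal.span {f | ∃ u, IsGraver L u ∧ f = graverBinomial k u} := by
  induction hN : l1Norm v using Nat.strong_induction_on generalizing v with
  | _ N ih =>
    obtain rfl | hv0 := eq_or_ne v 0
    · simp [graverBinomial_eq_lawrenceBinomial]
    obtain ⟨u, hu, huv⟩ := exists_isGraver_conformalLE hv hv0
    have hlt : l1Norm (v - u) < N := by
      have := huv.l1Norm_sub_add; have := l1Norm_pos hu.2.1; omega
    rw [huv.graverBinomial_eq k]
    exact add_mem (Ideal.mul_mem_left _ _ (Ideal.subset_span ⟨u, hu, rfl⟩))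
      (Ideal.mul_mem_left _ _ (ih _ hlt (sub_mem hv hu.1) rfl))

end GraverBinomial

section Minimality

variable {k : Type*} [Field k] {ι : Type*} [Fintype ι]

theorem lawrenceBinomial_mem_span_monomial_not_le {μ : ι ⊕ ι →₀ ℕ} {a b : ι → ℕ}
    (hab : ¬lawrenceExponent a b ≤ μ) (hba : ¬lawrenceExponent b a ≤ μ) :
    lawrenceBinomial k a b ∈ Ideal.span ((fun s => monomial s (1 : k)) '' {ν | ¬ν ≤ μ}) :=
  sub_mem (Ideal.subset_span ⟨_, hab, rfl⟩) (Ideal.subset_span ⟨_, hba, rfl⟩)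

theorem lawrenceBinomial_notMem_span_monomial_not_le {a b : ι → ℕ} (hne : a ≠ b) :
    lawrenceBinomial k a b ∉
      Ideal.span ((fun s => monomial s (1 : k)) '' {ν | ¬ν ≤ lawrenceExponent a b}) := by
  classical
  have hexp : lawrenceExponent b a ≠ lawrenceExponent a b := fun h =>
    hne (le_antisymm (lawrenceExponent_le_iff.mp h.ge).1 (lawrenceExponent_le_iff.mp h.le).1)
  have hsupp : lawrenceExponent a b ∈ (lawrenceBinomial k a b).support := by
    rw [mem_support_iff, lawrenceBinomial, lawrenceMonomial, lawrenceMonomial, coeff_sub,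
      coeff_monomial, coeff_monomial, if_pos rfl, if_neg hexp, sub_zero]
    exact one_ne_zero
  rw [mem_ideal_span_monomial_image]
  intro h
  obtain ⟨ν, hν, hle⟩ := h _ hsupp
  exact hν hle

variable {n : ℕ} {L : Submodule ℤ (Fin n → ℤ)}

theorem graverBinomial_notMem_span_other_graver {w : Fin n → ℤ} (hw : IsGraver L w) :
    graverBinomial k w ∉
      Ideal.span {f | ∃ v, IsGraver L v ∧ v ≠ w ∧ v ≠ -w ∧ f = graverBinomial k v} := by
  have hne : Int.toNat ∘ w ≠ Int.toNat ∘ (-w) := fun h =>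
    hw.2.1 (funext fun i => by
      have := congrFun h i
      simp only [Function.comp_apply, Pi.neg_apply, Pi.zero_apply] at this ⊢
      omega)
  rw [graverBinomial_eq_lawrenceBinomial]
  refine fun hmem => lawrenceBinomial_notMem_span_monomial_not_le hne (Ideal.span_le.mpr ?_ hmem)
  rintro _ ⟨v, hv, hvw, hvw', rfl⟩
  rw [graverBinomial_eq_lawrenceBinomial]
  refine lawrenceBinomial_mem_span_monomial_not_le ?_ ?_ <;> rw [lawrenceExponent_le_iff]
  · exact fun h => hvw (hw.eq_of_conformalLE hv.1 hv.2.1 h)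
  · refine fun h => hvw' (neg_eq_iff_eq_neg.mp ?_)
    exact hw.eq_of_conformalLE (neg_mem hv.1) (neg_ne_zero.mpr hv.2.1)
      ⟨h.1, by rw [neg_neg]; exact h.2⟩

end Minimality

/-- the binomials `g_v`, for `v` a Graver element of `L`, generate the Lawrence
ideal `J_L`, and minimally so: no `g_w` lies in the ideal generated by the other Graver
binomials (omitting both `w` and `-w`). -/
theorem graver_binomials_generate_lawrence_minimally
    (k : Type*) [Field k] {n : ℕ} (L : Submodule ℤ (Fin n → ℤ)) :
    Ideal.span {f | ∃ v, IsGraver L v ∧ f = graverBinomial k v} = lawrenceIdeal k L ∧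
    ∀ w, IsGraver L w →
      graverBinomial k w ∉
        Ideal.span {f | ∃ v, IsGraver L v ∧ v ≠ w ∧ v ≠ -w ∧ f = graverBinomial k v} := by
  refine ⟨le_antisymm ?_ ?_, fun w hw => graverBinomial_notMem_span_other_graver hw⟩
  · rw [Ideal.span_le]
    rintro _ ⟨v, hv, rfl⟩
    exact graverBinomial_mem_lawrenceIdeal hv.1
  · rw [lawrenceIdeal, Ideal.span_le]
    rintro _ ⟨a, b, hab, rfl⟩
    rw [← lawrenceMonomial_eq_prod, ← lawrenceMonomial_eq_prod, ← lawrenceBinomial,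
      lawrenceBinomial_eq_mul_graverBinomial]
    exact Ideal.mul_mem_left _ _ (graverBinomial_mem_span_graver hab)
end

section
/- Let L be a unimodular subgroup of ℤ^n. Then the closed faces of the arrangement H_L fall into finitely many classes modulo translation by L: there exists a finite collection 𝓕 of subsets of ℝ^n such that every closed face F_u (u ∈ ℝL) equals v + F for some v ∈ L and some F ∈ 𝓕. -/
/-- The closed face `F_u = {x ∈ ℝL : ⌊u_i⌋ ≤ x_i ≤ ⌈u_i⌉ for all i}` of the arrangement `H_L`
determined by a point `u`. -/
def closedFace {n : ℕ} (L : Submodule ℤ (Fin n → ℤ)) (u : Fin n → ℝ) : Set (Fin n → ℝ) :=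
  {x | x ∈ realSpan L ∧ ∀ i, (⌊u i⌋ : ℝ) ≤ x i ∧ x i ≤ (⌈u i⌉ : ℝ)}

open Set

def intCastVecLinear (n : ℕ) : (Fin n → ℤ) →ₗ[ℤ] (Fin n → ℝ) where
  toFun := intCastVec
  map_add' v w := by ext i; simp [intCastVec]
  map_smul' c v := by ext i; simp [intCastVec]

@[simp]
lemma intCastVecLinear_apply {n : ℕ} (v : Fin n → ℤ) : intCastVecLinear n v = intCastVec v := rfl

lemma intCastVec_mem_realSpan {n : ℕ} {L : Submodule ℤ (Fin n → ℤ)} {v : Fin n → ℤ}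
    (hv : v ∈ L) : intCastVec v ∈ realSpan L :=
  Submodule.subset_span ⟨v, hv, rfl⟩

lemma realSpan_span_range {n m : ℕ} (g : Fin m → Fin n → ℤ) :
    realSpan (Submodule.span ℤ (range g)) = Submodule.span ℝ (range (intCastVec ∘ g)) := by
  apply le_antisymm
  · refine Submodule.span_le.mpr ?_
    rintro _ ⟨v, hv, rfl⟩
    have hmap : intCastVecLinear n v ∈ Submodule.span ℤ (intCastVecLinear n '' range g) := by
      rw [Submodule.span_image]
      exact Submodule.mem_map_of_mem hv
    rw [← range_comp] at hmap
    exact Submodule.span_le_restrictScalars ℤ ℝ _ hmap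
  · refine Submodule.span_mono ?_
    rintro _ ⟨j, rfl⟩
    exact ⟨g j, Submodule.subset_span ⟨j, rfl⟩, rfl⟩

/-- Every lattice is cocompact in its real span, with respect to the sup norm. -/
lemma exists_norm_sub_intCastVec_le {n : ℕ} (L : Submodule ℤ (Fin n → ℤ)) :
    ∃ C : ℝ, ∀ u ∈ realSpan L, ∃ v ∈ L, ‖u - intCastVec v‖ ≤ C := by
  obtain ⟨m, g, rfl⟩ :=
    Submodule.fg_iff_exists_fin_generating_family.mp (IsNoetherian.noetherian L)
  refine ⟨∑ j, ‖intCastVec (g j)‖, fun u hu => ?_⟩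
  rw [realSpan_span_range] at hu
  obtain ⟨c, rfl⟩ := (Submodule.mem_span_range_iff_exists_fun ℝ).mp hu
  refine ⟨∑ j, ⌊c j⌋ • g j,
    Submodule.sum_mem _ fun j _ => Submodule.smul_mem _ _ (Submodule.subset_span ⟨j, rfl⟩), ?_⟩
  have hdiff : ∑ j, c j • intCastVec (g j) - intCastVec (∑ j, ⌊c j⌋ • g j) =
      ∑ j, Int.fract (c j) • intCastVec (g j) := by
    rw [← intCastVecLinear_apply, map_sum, ← Finset.sum_sub_distrib]
    refine Finset.sum_congr rfl fun j _ => ?_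
    rw [map_zsmul, intCastVecLinear_apply, Int.fract, sub_smul, Int.cast_smul_eq_zsmul]
  rw [Function.comp_def, hdiff]
  refine (norm_sum_le _ _).trans (Finset.sum_le_sum fun j _ => ?_)
  rw [norm_smul, Real.norm_of_nonneg (Int.fract_nonneg _)]
  exact mul_le_of_le_one_left (norm_nonneg _) (Int.fract_lt_one _).le

def latticeBox {n : ℕ} (L : Submodule ℤ (Fin n → ℤ)) (a b : Fin n → ℤ) : Set (Fin n → ℝ) :=
  {x | x ∈ realSpan L ∧ ∀ i, (a i : ℝ) ≤ x i ∧ x i ≤ (b i : ℝ)}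

lemma closedFace_eq_latticeBox {n : ℕ} (L : Submodule ℤ (Fin n → ℤ)) (u : Fin n → ℝ) :
    closedFace L u = latticeBox L (fun i => ⌊u i⌋) (fun i => ⌈u i⌉) :=
  rfl

lemma latticeBox_add {n : ℕ} {L : Submodule ℤ (Fin n → ℤ)} {v : Fin n → ℤ} (hv : v ∈ L)
    (a b : Fin n → ℤ) :
    latticeBox L (a + v) (b + v) = (fun x => intCastVec v + x) '' latticeBox L a b := by
  rw [image_add_left]
  ext x
  have hmem : -intCastVec v + x ∈ realSpan L ↔ x ∈ realSpan L :=
    Submodule.add_mem_iff_right _ (Submodule.neg_mem _ (intCastVec_mem_realSpan hv))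
  simp only [latticeBox, mem_ofPred_eq, mem_preimage, hmem, Pi.add_apply, Pi.neg_apply,
    Int.cast_add, intCastVec]
  refine and_congr_right fun _ => forall_congr' fun i => ?_
  constructor <;> rintro ⟨h₁, h₂⟩ <;> constructor <;> linarith

lemma floor_sub_mem_Icc_of_abs_sub_le {x C : ℝ} {k : ℤ} (h : |x - k| ≤ C) :
    ⌊x⌋ - k ∈ Icc (-⌈C⌉) ⌈C⌉ := by
  obtain ⟨hlo, hhi⟩ := abs_le.mp h
  rw [← Int.floor_sub_intCast]
  refine ⟨Int.le_floor.mpr ?_, (Int.floor_mono hhi).trans (Int.floor_le_ceil C)⟩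
  push_cast
  linarith [Int.le_ceil C]

lemma ceil_sub_mem_Icc_of_abs_sub_le {x C : ℝ} {k : ℤ} (h : |x - k| ≤ C) :
    ⌈x⌉ - k ∈ Icc (-⌈C⌉) ⌈C⌉ := by
  obtain ⟨hlo, hhi⟩ := abs_le.mp h
  rw [← Int.ceil_sub_intCast]
  refine ⟨?_, Int.ceil_mono hhi⟩
  rw [neg_le, ← Int.floor_neg]
  exact (Int.floor_mono (neg_le.mp hlo)).trans (Int.floor_le_ceil C)

theorem closedFaces_finitely_many_orbits_general
    {n : ℕ} (L : Submodule ℤ (Fin n → ℤ)) :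
    ∃ 𝓕 : Set (Set (Fin n → ℝ)), 𝓕.Finite ∧
      ∀ u ∈ realSpan L, ∃ v ∈ L, ∃ F ∈ 𝓕,
        closedFace L u = (fun x => intCastVec v + x) '' F := by
  obtain ⟨C, hC⟩ := exists_norm_sub_intCastVec_le L
  set corners : Set (Fin n → ℤ) := Icc (fun _ => -⌈C⌉) (fun _ => ⌈C⌉)
  refine ⟨(fun p => latticeBox L p.1 p.2) '' (corners ×ˢ corners),
    ((finite_Icc _ _).prod (finite_Icc _ _)).image _, fun u hu => ?_⟩
  obtain ⟨v, hv, huv⟩ := hC u hu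
  have hcoord : ∀ i, |u i - v i| ≤ C := fun i => (norm_le_pi_norm _ i).trans huv
  have hfloor : (fun i => ⌊u i⌋ - v i) ∈ corners :=
    ⟨fun i => (floor_sub_mem_Icc_of_abs_sub_le (hcoord i)).1,
      fun i => (floor_sub_mem_Icc_of_abs_sub_le (hcoord i)).2⟩
  have hceil : (fun i => ⌈u i⌉ - v i) ∈ corners :=
    ⟨fun i => (ceil_sub_mem_Icc_of_abs_sub_le (hcoord i)).1,
      fun i => (ceil_sub_mem_Icc_of_abs_sub_le (hcoord i)).2⟩
  refine ⟨v, hv, _, mem_image_of_mem _ (mk_mem_prod hfloor hceil), ?_⟩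
  rw [← latticeBox_add hv, closedFace_eq_latticeBox]
  congr <;> ext i <;> simp

/-- if `L` is unimodular, the closed faces of `H_L` fall into finitely many
classes modulo translation by `L`. -/
theorem closedFaces_finitely_many_orbits
    {n : ℕ} (L : Submodule ℤ (Fin n → ℤ)) (hL : IsUnimodular L) :
    ∃ 𝓕 : Set (Set (Fin n → ℝ)), 𝓕.Finite ∧
      ∀ u ∈ realSpan L, ∃ v ∈ L, ∃ F ∈ 𝓕,
        closedFace L u = (fun x => intCastVec v + x) '' F :=
  closedFaces_finitely_many_orbits_general L
end

section
/- Let k be a field, C an abelian group, π : ℤ^n → C a group homomorphism, and L = ker π. Let S = k[x_1,…,x_n,y_1,…,y_n], let k[C] be the group algebra of C over k, and let φ : S → k[C] ⊗_k k[z_1,…,z_n] be the k-algebra homomorphism determined by φ(x_i) = [π(e_i)] ⊗ z_i and φ(y_i) = [0] ⊗ z_i = 1 ⊗ z_i, where e_1,…,e_n is the standard basis of ℤ^n and [c] denotes the basis element of k[C] corresponding to c ∈ C. Then the kernel of φ equals the Lawrence ideal J_L. -/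
/-!
The map `φ` sends the monomial `x^a y^b` to the basis vector `[π a] ⊗ z^(a+b)` of
`k[C] ⊗ k[z]`, so it maps the monomial basis into a basis through the exponent map
`(a, b) ↦ (π a, a + b)`. The kernel of a linear map that sends a basis into a basis is spanned by
the differences of basis vectors with the same image, here the binomials `x^a y^b - x^a' y^b'` with
`π a = π a'` and `a + b = a' + b'`. Dividing such a binomial by the gcd of its two monomials
leaves `x^s y^t - x^t y^s` with `s - t = a - a' ∈ L`, a generator of `J_L`.
-/

open MvPolynomial
open scoped TensorProduct

theorem LinearMap.ker_eq_span_sub_of_basis {R M N G H : Type*} [Ring R] [AddCommGroup M]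
    [Module R M] [AddCommGroup N] [Module R N] (b : Module.Basis G R M)
    (c : Module.Basis H R N) (F : G → H) (φ : M →ₗ[R] N) (hφ : ∀ g, φ (b g) = c (F g)) :
    ker φ = Submodule.span R {x | ∃ g g', F g = F g' ∧ x = b g - b g'} := by
  classical
  set D := Submodule.span R {x | ∃ g g', F g = F g' ∧ x = b g - b g'}
  -- `θ ∘ φ` replaces each `b g` by a fixed representative of its fibre,
  -- so `x - θ (φ x) ∈ D` for every `x`.
  let θ : N →ₗ[R] M := c.constr ℕ fun h => if hh : ∃ g, F g = h then b hh.choose else 0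
  refine le_antisymm (fun x hx => ?_) ?_
  · have hθ : ⊤ ≤ D.comap (LinearMap.id - θ ∘ₗ φ) := by
      rw [← b.span_eq, Submodule.span_le]
      rintro _ ⟨g, rfl⟩
      have hg : ∃ g', F g' = F g := ⟨g, rfl⟩
      simp only [SetLike.mem_coe, Submodule.mem_comap, sub_apply, id_apply, comp_apply, hφ,
        θ, Module.Basis.constr_basis, dif_pos hg]
      exact Submodule.subset_span ⟨g, _, hg.choose_spec.symm, rfl⟩
    simpa [mem_ker.mp hx] using hθ (Submodule.mem_top (x := x))
  · rw [Submodule.span_le]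
    rintro _ ⟨g, g', hgg', rfl⟩
    simp [hφ, hgg']

theorem MvPolynomial.monomial_one_eq_prod_X_pow {R σ : Type*} [CommSemiring R] [Fintype σ]
    (u : σ →₀ ℕ) : (monomial u 1 : MvPolynomial σ R) = ∏ j, X j ^ u j := by
  rw [monomial_eq, map_one, one_mul, Finsupp.prod_fintype _ _ fun _ => pow_zero _]

theorem MvPolynomial.prod_X_inl_pow_mul_prod_X_inr_pow {R ι : Type*} [CommSemiring R]
    [Fintype ι] (a b : ι → ℕ) :
    ((∏ i, X (Sum.inl i) ^ a i) * ∏ i, X (Sum.inr i) ^ b i : MvPolynomial (ι ⊕ ι) R)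
      = monomial (Finsupp.equivFunOnFinite.symm (Sum.elim a b)) 1 := by
  simp [monomial_one_eq_prod_X_pow, Fintype.prod_sum_type]

theorem Algebra.TensorProduct.prod_tmul_prod {R A B κ : Type*} [CommSemiring R]
    [CommSemiring A] [CommSemiring B] [Algebra R A] [Algebra R B] (s : Finset κ) (x : κ → A)
    (y : κ → B) :
    (∏ i ∈ s, x i) ⊗ₜ[R] (∏ i ∈ s, y i) = ∏ i ∈ s, x i ⊗ₜ[R] y i := by
  classical
  induction s using Finset.induction_on with
  | empty => rfl
  | insert _ _ h ih => simp [Finset.prod_insert h, ← ih, tmul_mul_tmul]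

theorem AddMonoidHom.map_natCast_eq_sum {ι A : Type*} [Fintype ι] [DecidableEq ι]
    [AddCommMonoid A] (π : (ι → ℤ) →+ A) (a : ι → ℕ) :
    π (fun i => (a i : ℤ)) = ∑ i, a i • π (Pi.single i 1) := by
  conv_lhs => rw [← Finset.univ_sum_single fun i => (a i : ℤ)]
  simp [← map_nsmul, ← Pi.single_smul']

section Toric

variable (k : Type*) {ι C : Type*} [Fintype ι] [AddCommGroup C] (π : (ι → ℤ) →+ C)

section CommRing

variable [CommRing k]

noncomputable def toricMap [DecidableEq ι] :
    MvPolynomial (ι ⊕ ι) k →ₐ[k] AddMonoidAlgebra k C ⊗[k] MvPolynomial ι k :=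
  aeval (Sum.elim (fun i => AddMonoidAlgebra.of' k C (π (Pi.single i 1)) ⊗ₜ X i)
    fun i => 1 ⊗ₜ X i)

noncomputable def toricWeight (u : ι ⊕ ι →₀ ℕ) : C × (ι →₀ ℕ) :=
  (π fun i => (u (Sum.inl i) : ℤ),
    Finsupp.equivFunOnFinite.symm fun i => u (Sum.inl i) + u (Sum.inr i))

noncomputable def toricBasis : Module.Basis (C × (ι →₀ ℕ)) k
    (AddMonoidAlgebra k C ⊗[k] MvPolynomial ι k) :=
  (AddMonoidAlgebra.basis C k).tensorProduct (basisMonomials ι k)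

theorem toricMap_monomial [DecidableEq ι] (u : ι ⊕ ι →₀ ℕ) :
    toricMap k π (monomial u 1) = toricBasis k (toricWeight π u) := by
  simp only [toricBasis, toricWeight, Module.Basis.tensorProduct_apply, coe_basisMonomials,
    AddMonoidAlgebra.basis_apply, monomial_one_eq_prod_X_pow, Finsupp.coe_equivFunOnFinite_symm,
    pow_add, Finset.prod_mul_distrib, Fintype.prod_sum_type, map_mul, map_prod, map_pow,
    toricMap, aeval_X, Sum.elim_inl, Sum.elim_inr, Algebra.TensorProduct.tmul_pow, one_pow,
    ← Algebra.TensorProduct.prod_tmul_prod, Finset.prod_const_one,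
    Algebra.TensorProduct.tmul_mul_tmul, mul_one, AddMonoidAlgebra.of'_apply,
    AddMonoidAlgebra.single_pow, AddMonoidAlgebra.prod_single, π.map_natCast_eq_sum]

theorem ker_toricMap_eq_span [DecidableEq ι] :
    LinearMap.ker (toricMap k π).toLinearMap = Submodule.span k
      {f | ∃ u v, toricWeight π u = toricWeight π v ∧ f = monomial u 1 - monomial v 1} := by
  simpa using LinearMap.ker_eq_span_sub_of_basis (basisMonomials (ι ⊕ ι) k) (toricBasis k)
    (toricWeight π) _ fun u => by simpa using toricMap_monomial k π u

end CommRing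

section Field

variable [Field k]

theorem monomial_sub_monomial_mem_lawrenceIdeal {u v : ι ⊕ ι →₀ ℕ}
    (h : toricWeight π u = toricWeight π v) :
    monomial u 1 - monomial v 1 ∈ lawrenceIdeal k π.ker.toIntSubmodule := by
  obtain ⟨hπ, hdeg⟩ := Prod.ext_iff.mp h
  replace hdeg : ∀ i, u (Sum.inl i) + u (Sum.inr i) = v (Sum.inl i) + v (Sum.inr i) :=
    fun i => by simpa [toricWeight] using DFunLike.congr_fun hdeg i
  set s : ι → ℕ := fun i => u (Sum.inl i) - v (Sum.inl i)
  set t : ι → ℕ := fun i => v (Sum.inl i) - u (Sum.inl i)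
  -- `hdeg` forces the `y`-exponents left after dividing by `u ⊓ v` to be `t` and `s`.
  have hu : u = u ⊓ v + Finsupp.equivFunOnFinite.symm (Sum.elim s t) := by
    ext (i | i) <;> simp only [Finsupp.coe_add, Finsupp.coe_equivFunOnFinite_symm, Pi.add_apply,
      Finsupp.inf_apply, Sum.elim_inl, Sum.elim_inr, s, t] <;> grind
  have hv : v = u ⊓ v + Finsupp.equivFunOnFinite.symm (Sum.elim t s) := by
    ext (i | i) <;> simp only [Finsupp.coe_add, Finsupp.coe_equivFunOnFinite_symm, Pi.add_apply,
      Finsupp.inf_apply, Sum.elim_inl, Sum.elim_inr, s, t] <;> grind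
  have hst : (fun i => (s i : ℤ) - t i) ∈ π.ker.toIntSubmodule := by
    have hdiff : (fun i => (s i : ℤ) - t i)
        = (fun i => (u (Sum.inl i) : ℤ)) - fun i => (v (Sum.inl i) : ℤ) := by
      ext i; simp only [Pi.sub_apply, s, t]; omega
    rw [hdiff]
    exact (π.map_sub _ _).trans (sub_eq_zero.mpr hπ)
  have hfactor : (monomial u 1 - monomial v 1 : MvPolynomial (ι ⊕ ι) k) = monomial (u ⊓ v) 1 *
      (monomial (Finsupp.equivFunOnFinite.symm (Sum.elim s t)) 1
        - monomial (Finsupp.equivFunOnFinite.symm (Sum.elim t s)) 1) := by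
    rw [mul_sub, monomial_mul, monomial_mul, one_mul, ← hu, ← hv]
  rw [hfactor]
  refine Ideal.mul_mem_left _ _ (Ideal.subset_span ⟨s, t, hst, ?_⟩)
  rw [prod_X_inl_pow_mul_prod_X_inr_pow, prod_X_inl_pow_mul_prod_X_inr_pow]

theorem ker_toricMap [DecidableEq ι] :
    RingHom.ker (toricMap k π) = lawrenceIdeal k π.ker.toIntSubmodule := by
  have hker (f) :
      f ∈ RingHom.ker (toricMap k π) ↔ f ∈ LinearMap.ker (toricMap k π).toLinearMap :=
    Iff.rfl
  refine le_antisymm (fun f hf => ?_) ?_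
  · rw [hker, ker_toricMap_eq_span] at hf
    refine Submodule.span_le (p := (lawrenceIdeal k _).restrictScalars k) |>.mpr ?_ hf
    rintro _ ⟨u, v, huv, rfl⟩
    exact monomial_sub_monomial_mem_lawrenceIdeal k π huv
  · rw [lawrenceIdeal, Ideal.span_le]
    rintro _ ⟨a, b, hab, rfl⟩
    rw [SetLike.mem_coe, hker, ker_toricMap_eq_span, prod_X_inl_pow_mul_prod_X_inr_pow,
      prod_X_inl_pow_mul_prod_X_inr_pow]
    have hπ : π (fun i => (a i : ℤ)) = π (fun i => (b i : ℤ)) :=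
      sub_eq_zero.mp ((π.map_sub _ _).symm.trans hab)
    exact Submodule.subset_span ⟨_, _, by simp [toricWeight, hπ, add_comm], rfl⟩

end Field

end Toric

/-- for a group homomorphism `π : ℤ^n → C` with kernel `L`, the kernel of the
`k`-algebra map `φ : k[x, y] → k[C] ⊗ k[z]` with `φ(x_i) = [π(e_i)] ⊗ z_i` and
`φ(y_i) = [0] ⊗ z_i = 1 ⊗ z_i` is the Lawrence ideal `J_L`. -/
theorem ker_toric_map_eq_lawrenceIdeal (k : Type*) [Field k] {n : ℕ}
    (C : Type*) [AddCommGroup C] (π : (Fin n → ℤ) →+ C) :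
    RingHom.ker (MvPolynomial.aeval (R := k)
      (Sum.elim
        (fun i : Fin n =>
          (AddMonoidAlgebra.of' k C (π (Pi.single i 1))) ⊗ₜ[k]
            (X i : MvPolynomial (Fin n) k))
        (fun i : Fin n =>
          (1 : AddMonoidAlgebra k C) ⊗ₜ[k] (X i : MvPolynomial (Fin n) k)))) =
    lawrenceIdeal k (AddSubgroup.toIntSubmodule π.ker) :=
  ker_toricMap k π
end
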